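/- arXiv:1602.04172 — 3 statements merged into one kernel-verified Lean document; each statement's English description precedes it below -/
import Mathlib

section
/- Let N ≥ 2 be an integer and let V : (0,∞) → ℝ be continuous and satisfy condition (V), and let U be the unique solution of equation (O) with lim_{r→0} U(r)/r^{A⁺(λ1)} = 1. If w ∈ C²((0,∞)) is any solution of equation (O) such that, as r → 0, w(r) = o(r^{A⁻(λ1)}) in the case λ1 > λ*, and w(r) = o(r^{−(N−2)/2}|log r|) in the case λ1 = λ*, then there exists a constant c ∈ ℝ such that w(r) = c·U(r) for all r ∈ (0,∞). -/
open MeasureTheory Metric Filter Set Asymptotics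

noncomputable section

/-- `λ* = -(N-2)²/4`. -/
def lamStar (N : ℕ) : ℝ := -((N : ℝ) - 2) ^ 2 / 4

/-- `A⁺(λ) = (-(N-2) + √((N-2)² + 4λ))/2`. -/
def Aplus (N : ℕ) (l : ℝ) : ℝ :=
  (-((N : ℝ) - 2) + Real.sqrt (((N : ℝ) - 2) ^ 2 + 4 * l)) / 2

/-- `A⁻(λ) = (-(N-2) - √((N-2)² + 4λ))/2`. -/
def Aminus (N : ℕ) (l : ℝ) : ℝ :=
  (-((N : ℝ) - 2) - Real.sqrt (((N : ℝ) - 2) ^ 2 + 4 * l)) / 2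

/-- Condition (V): `r^{-θ}|r²V(r)-λ₁| → 0` as `r → 0⁺` and `r^{θ}|r²V(r)-λ₂| → 0` as `r → ∞`. -/
def CondV (V : ℝ → ℝ) (θ l1 l2 : ℝ) : Prop :=
  Tendsto (fun r : ℝ => r ^ (-θ) * |r ^ 2 * V r - l1|) (nhdsWithin 0 (Ioi 0)) (nhds 0) ∧
  Tendsto (fun r : ℝ => r ^ θ * |r ^ 2 * V r - l2|) atTop (nhds 0)

/-- A `C²` solution of the ODE (O): `U'' + ((N-1)/r) U' - V U = 0` on `(0,∞)`. -/
def IsSolO (N : ℕ) (V U : ℝ → ℝ) : Prop :=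
  ContDiffOn ℝ 2 U (Ioi 0) ∧
  ∀ r ∈ Ioi (0 : ℝ),
    deriv (deriv U) r + (((N : ℝ) - 1) / r) * deriv U r - V r * U r = 0

abbrev Euc (N : ℕ) := EuclideanSpace ℝ (Fin N)

/-- A smooth compactly supported test function on `ℝ^N \ {0}`. -/
def IsTestFun {N : ℕ} (φ : Euc N → ℝ) : Prop :=
  ContDiff ℝ (⊤ : ℕ∞) φ ∧ HasCompactSupport φ ∧ tsupport φ ⊆ {x : Euc N | x ≠ 0}

/-- Nonnegativity of the Schrödinger operator `-Δ + Q` in the quadratic form sense, tested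
against smooth functions compactly supported in `ℝ^N \ {0}`. -/
def SchNonneg (N : ℕ) (Q : Euc N → ℝ) : Prop :=
  ∀ φ : Euc N → ℝ, IsTestFun φ →
    0 ≤ ∫ x : Euc N, (‖gradient φ x‖ ^ 2 + Q x * φ x ^ 2)

/-- Subcriticality of `-Δ + Q`. -/
def SchSubcritical (N : ℕ) (Q : Euc N → ℝ) : Prop :=
  ∀ W : Euc N → ℝ, ContDiff ℝ (⊤ : ℕ∞) W → HasCompactSupport W →
    ∃ ε : ℝ, 0 < ε ∧ SchNonneg N (fun x => Q x - ε * W x)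

/-- Criticality: nonnegative but not subcritical. -/
def SchCritical (N : ℕ) (Q : Euc N → ℝ) : Prop :=
  SchNonneg N Q ∧ ¬ SchSubcritical N Q

/-- The Laplacian as the sum of the second directional derivatives along coordinate axes. -/
def lap (N : ℕ) (f : Euc N → ℝ) (x : Euc N) : ℝ :=
  ∑ i : Fin N,
    fderiv ℝ (fun y => fderiv ℝ f y (EuclideanSpace.single i 1)) x (EuclideanSpace.single i 1)

/-- A fundamental solution of `∂ₜ u = Δu - V(|x|)u`, the heat equation being satisfied on
`(ℝ^N \ {0}) × (0,∞)`. -/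
def IsFundSol (N : ℕ) (V : ℝ → ℝ) (p : Euc N → Euc N → ℝ → ℝ) : Prop :=
  ContinuousOn (fun q : (Euc N × Euc N) × ℝ => p q.1.1 q.1.2 q.2) (univ ×ˢ Ioi 0) ∧
  (∀ x y t, 0 < t → 0 < p x y t) ∧
  (∀ x y t, p x y t = p y x t) ∧
  (∀ y t, 0 < t → ContDiffOn ℝ 2 (fun x => p x y t) {x : Euc N | x ≠ 0}) ∧
  (∀ y (x : Euc N), x ≠ 0 → ∀ t, 0 < t →
    HasDerivAt (fun s => p x y s) (lap N (fun z => p z y t) x - V ‖x‖ * p x y t) t) ∧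
  (∀ x y s t, 0 < s → 0 < t → ∫ z : Euc N, p x z t * p z y s = p x y (t + s)) ∧
  (∀ f : Euc N → ℝ, Continuous f → HasCompactSupport f → ∀ x : Euc N,
    Tendsto (fun t => ∫ y : Euc N, p x y t * f y) (nhdsWithin 0 (Ioi 0)) (nhds (f x)))

/-- A fundamental solution of `∂ₜ u = Δu - V(x)u` with the heat equation satisfied on all of
`ℝ^N × (0,∞)`. -/
def IsFundSolAll (N : ℕ) (V : Euc N → ℝ) (p : Euc N → Euc N → ℝ → ℝ) : Prop :=
  ContinuousOn (fun q : (Euc N × Euc N) × ℝ => p q.1.1 q.1.2 q.2) (univ ×ˢ Ioi 0) ∧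
  (∀ x y t, 0 < t → 0 < p x y t) ∧
  (∀ x y t, p x y t = p y x t) ∧
  (∀ y t, 0 < t → ContDiff ℝ 2 (fun x => p x y t)) ∧
  (∀ y (x : Euc N) t, 0 < t →
    HasDerivAt (fun s => p x y s) (lap N (fun z => p z y t) x - V x * p x y t) t) ∧
  (∀ x y s t, 0 < s → 0 < t → ∫ z : Euc N, p x z t * p z y s = p x y (t + s)) ∧
  (∀ f : Euc N → ℝ, Continuous f → HasCompactSupport f → ∀ x : Euc N,
    Tendsto (fun t => ∫ y : Euc N, p x y t * f y) (nhdsWithin 0 (Ioi 0)) (nhds (f x)))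

/-- `ω` is an `A₂` weight on `ℝ^N`. -/
def IsA2 (N : ℕ) (ω : Euc N → ℝ) : Prop :=
  (∀ x, 0 ≤ ω x) ∧ LocallyIntegrable ω volume ∧
    LocallyIntegrable (fun x => (ω x)⁻¹) volume ∧
  ∃ C : ℝ, ∀ (x : Euc N) (r : ℝ), 0 < r →
    (∫ z in ball x r, ω z) * (∫ z in ball x r, (ω z)⁻¹) ≤
      C * ((volume (ball x r)).toReal) ^ 2

/-- The model solution `u⁺_λ(r) = r^{A⁺(λ)}` (which equals `r^{-(N-2)/2}` when `λ = λ*`). -/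
def uPl (N : ℕ) (l : ℝ) (r : ℝ) : ℝ := r ^ Aplus N l

/-- The model solution `u⁻_λ`: `r^{A⁻(λ)}` if `λ > λ*`, and `r^{-(N-2)/2}|log r|` if `λ = λ*`. -/
def uMi (N : ℕ) (l : ℝ) (r : ℝ) : ℝ :=
  if l = lamStar N then r ^ (-((N : ℝ) - 2) / 2) * |Real.log r| else r ^ Aminus N l

/-- `F[U](r) = U(r) ∫₀^r s^{1-N} U(s)^{-2} (∫₀^s τ^{N-1} U(τ)² dτ) ds`. -/
def FU (N : ℕ) (U : ℝ → ℝ) (r : ℝ) : ℝ :=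
  U r * ∫ s in (0:ℝ)..r, s ^ ((1:ℝ) - N) / U s ^ 2 *
    ∫ τ in (0:ℝ)..s, τ ^ ((N:ℝ) - 1) * U τ ^ 2

/-- `ζ(t) = t^{γ₁} (log(c+t))^{γ₂}`. -/
def zeta (γ1 γ2 c : ℝ) (t : ℝ) : ℝ := t ^ γ1 * Real.log (c + t) ^ γ2


/- Auxiliary lemmas -/

lemma sol_hasDerivAt {N V U} (hU : IsSolO N V U) {r : ℝ} (hr : 0 < r) :
    HasDerivAt U (deriv U r) r ∧ HasDerivAt (deriv U) (deriv (deriv U) r) r := by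
  have hne : Ioi (0:ℝ) ∈ nhds r := isOpen_Ioi.mem_nhds hr
  constructor
  · exact ((hU.1.differentiableOn (by norm_num)).differentiableAt hne).hasDerivAt
  · have h1 : ContDiffOn ℝ 1 (deriv U) (Ioi 0) :=
      hU.1.deriv_of_isOpen isOpen_Ioi (by norm_num)
    exact ((h1.differentiableOn (by norm_num)).differentiableAt hne).hasDerivAt

lemma sol_ode {N V U} (hU : IsSolO N V U) {r : ℝ} (hr : 0 < r) :
    deriv (deriv U) r = V r * U r - (((N : ℝ) - 1) / r) * deriv U r := by
  have := hU.2 r hr; linarith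

/-- Forward uniqueness: if a solution `g` of (O) vanishes on a neighborhood of `t1 > 0`,
it vanishes at every `r ≥ t1`. -/
lemma ode_ext {N : ℕ} (hN : 2 ≤ N) {V g : ℝ → ℝ} (hV : ContinuousOn V (Ioi 0))
    (hg : IsSolO N V g) {t1 : ℝ} (ht1 : 0 < t1)
    (hz : ∀ᶠ t in nhds t1, g t = 0) {r : ℝ} (hr : t1 ≤ r) : g r = 0 := by
  rcases eq_or_lt_of_le hr with rfl | hlt
  · exact hz.self_of_nhds
  set b := r with hb
  -- derivative facts
  have hdg : ∀ t, 0 < t → HasDerivAt g (deriv g t) t := fun t ht => (sol_hasDerivAt hg ht).1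
  have hdg2 : ∀ t, 0 < t →
      HasDerivAt (deriv g) (V t * g t - (((N:ℝ)-1)/t) * deriv g t) t := fun t ht => by
    have := (sol_hasDerivAt hg ht).2
    rwa [sol_ode hg ht] at this
  -- bound for V on [t1, b]
  have hsub : Icc t1 b ⊆ Ioi (0:ℝ) := fun x hx => lt_of_lt_of_le ht1 hx.1
  obtain ⟨M1, hM1⟩ := (isCompact_Icc (a := t1) (b := b)).exists_bound_of_continuousOn
    (hV.mono hsub)
  set M2 : ℝ := ((N:ℝ)-1)/t1 with hM2
  have hM2pos : 0 < M2 := by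
    apply div_pos _ ht1
    have : (2:ℝ) ≤ (N:ℝ) := by exact_mod_cast hN
    linarith
  set K' : ℝ := |M1| + M2 + 1 with hK'
  have hK'1 : 1 ≤ K' := by
    have := abs_nonneg M1; linarith
  have hK'0 : 0 ≤ K' := by linarith
  -- clamp function
  set ρ : ℝ → ℝ := fun t => max t1 (min t b) with hρ
  have hρmem : ∀ t, ρ t ∈ Icc t1 b := fun t =>
    ⟨le_max_left _ _, max_le (le_of_lt hlt) (min_le_right _ _)⟩
  have hρeq : ∀ t ∈ Icc t1 b, ρ t = t := fun t ht => by
    simp only [hρ]; rw [min_eq_left ht.2, max_eq_right ht.1]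
  have hρpos : ∀ t, 0 < ρ t := fun t => lt_of_lt_of_le ht1 (hρmem t).1
  -- vector field
  set v : ℝ → ℝ × ℝ → ℝ × ℝ :=
    fun t x => (x.2, V (ρ t) * x.1 - (((N:ℝ)-1)/ρ t) * x.2) with hv
  have hVb : ∀ t, |V (ρ t)| ≤ |M1| := fun t =>
    le_trans (le_trans (le_of_eq (Real.norm_eq_abs _).symm) (hM1 _ (hρmem t))) (le_abs_self M1)
  have hN1 : (0:ℝ) ≤ (N:ℝ)-1 := by
    have : (2:ℝ) ≤ (N:ℝ) := by exact_mod_cast hN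
    linarith
  have hqb : ∀ t, |(((N:ℝ)-1)/ρ t)| ≤ M2 := fun t => by
    rw [abs_of_nonneg (div_nonneg hN1 (le_of_lt (hρpos t)))]
    exact div_le_div_of_nonneg_left hN1 ht1 (hρmem t).1
  -- Lipschitz bound
  have hlip : ∀ t, LipschitzWith K'.toNNReal (v t) := by
    intro t
    apply LipschitzWith.of_dist_le_mul
    intro x y
    have hco : (K'.toNNReal : ℝ) = K' := Real.coe_toNNReal _ hK'0
    rw [hco, Prod.dist_eq, Prod.dist_eq]
    simp only [hv, Real.dist_eq]
    set D := max |x.1 - y.1| |x.2 - y.2| with hD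
    have hD1 : |x.1 - y.1| ≤ D := le_max_left _ _
    have hD2 : |x.2 - y.2| ≤ D := le_max_right _ _
    have hDnn : 0 ≤ D := le_trans (abs_nonneg _) hD1
    apply max_le
    · nlinarith [abs_nonneg (x.1 - y.1)]
    · have : V (ρ t) * x.1 - ((N:ℝ)-1)/ρ t * x.2 - (V (ρ t) * y.1 - ((N:ℝ)-1)/ρ t * y.2)
          = V (ρ t) * (x.1 - y.1) - ((N:ℝ)-1)/ρ t * (x.2 - y.2) := by ring
      rw [this]
      have h1 : |V (ρ t) * (x.1 - y.1) - ((N:ℝ)-1)/ρ t * (x.2 - y.2)|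
          ≤ |V (ρ t)| * |x.1 - y.1| + |((N:ℝ)-1)/ρ t| * |x.2 - y.2| := by
        calc _ ≤ |V (ρ t) * (x.1 - y.1)| + |((N:ℝ)-1)/ρ t * (x.2 - y.2)| := abs_sub _ _
        _ = _ := by rw [abs_mul, abs_mul]
      have h2 := hVb t
      have h3 := hqb t
      have h4 : 0 ≤ M2 := le_of_lt hM2pos
      have h5 : |V (ρ t)| * |x.1 - y.1| ≤ |M1| * D :=
        mul_le_mul h2 hD1 (abs_nonneg _) (abs_nonneg _)
      have h6 : |((N:ℝ)-1)/ρ t| * |x.2 - y.2| ≤ M2 * D :=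
        mul_le_mul h3 hD2 (abs_nonneg _) h4
      nlinarith [abs_nonneg M1]
  -- the vector solution
  set y : ℝ → ℝ × ℝ := fun t => (g t, deriv g t) with hy
  have hy' : ∀ t ∈ Icc t1 b, HasDerivAt y (v t (y t)) t := by
    intro t ht
    have htpos : 0 < t := lt_of_lt_of_le ht1 ht.1
    have h1 := hdg t htpos
    have h2 := hdg2 t htpos
    have : v t (y t) = (deriv g t, V t * g t - (((N:ℝ)-1)/t) * deriv g t) := by
      simp only [hv, hy, hρeq t ht]
    rw [this]
    exact h1.prodMk h2
  have hz0 : ∀ t ∈ Icc t1 b, v t (0, 0) = (0, 0) := by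
    intro t ht; simp [hv]
  have heq0 : y t1 = (0, 0) := by
    have h1 : g t1 = 0 := hz.self_of_nhds
    have h2 : deriv g t1 = 0 := by
      have := Filter.EventuallyEq.deriv_eq (f₁ := g) (f := fun _ => (0:ℝ)) hz
      simpa using this
    simp [hy, h1, h2]
  have := ODE_solution_unique (v := v) (K := K'.toNNReal) (f := y)
    (g := fun _ => ((0:ℝ), (0:ℝ))) (a := t1) (b := b) hlip
    (fun t ht => (hy' t ht).continuousAt.continuousWithinAt)
    (fun t ht => (hy' t (Ico_subset_Icc_self ht)).hasDerivWithinAt)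
    continuousOn_const
    (fun t ht => by
      rw [hz0 t (Ico_subset_Icc_self ht)]
      exact hasDerivWithinAt_const _ _ _)
    (by rw [heq0])
  have hyr := this ⟨le_of_lt hlt, le_refl b⟩
  have : g b = 0 := congrArg Prod.fst hyr
  exact this

/-- The Wronskian-type quantity has zero derivative. -/
lemma wronskian_hasDerivAt_zero {N : ℕ} {V U w : ℝ → ℝ}
    (hU : IsSolO N V U) (hw : IsSolO N V w) {r : ℝ} (hr : 0 < r) :
    HasDerivAt (fun t : ℝ => t ^ ((N:ℝ)-1) * (deriv w t * U t - w t * deriv U t)) 0 r := by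
  have hrne : r ≠ 0 := ne_of_gt hr
  have hU1 := (sol_hasDerivAt hU hr).1
  have hU2 := (sol_hasDerivAt hU hr).2
  have hw1 := (sol_hasDerivAt hw hr).1
  have hw2 := (sol_hasDerivAt hw hr).2
  have hpow : HasDerivAt (fun t : ℝ => t ^ ((N:ℝ)-1)) (((N:ℝ)-1) * r ^ ((N:ℝ)-1-1)) r :=
    Real.hasDerivAt_rpow_const (Or.inl hrne)
  have hin : HasDerivAt (fun t => deriv w t * U t - w t * deriv U t)
      (deriv (deriv w) r * U r + deriv w r * deriv U r -
        (deriv w r * deriv U r + w r * deriv (deriv U) r)) r :=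
    (hw2.mul hU1).sub (hw1.mul hU2)
  have := hpow.mul hin
  refine this.congr_deriv (Eq.symm ?_)
  rw [sol_ode hU hr, sol_ode hw hr]
  have hsplit : r ^ ((N:ℝ)-1) = r ^ ((N:ℝ)-1-1) * r := by
    rw [← Real.rpow_add_one hrne]; ring_nf
  rw [hsplit]
  field_simp
  ring

lemma const_of_derivAt_zero {f : ℝ → ℝ} (hf : ∀ r ∈ Ioi (0:ℝ), HasDerivAt f 0 r)
    {a b : ℝ} (ha : 0 < a) (hb : 0 < b) : f a = f b := by
  wlog hab : a ≤ b generalizing a b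
  · exact (this hb ha (le_of_not_ge hab)).symm
  have := constant_of_has_deriv_right_zero (f := f) (a := a) (b := b)
    (fun x hx => (hf x (lt_of_lt_of_le ha hx.1)).continuousAt.continuousWithinAt)
    (fun x hx => (hf x (lt_of_lt_of_le ha hx.1)).hasDerivWithinAt)
  exact (this b ⟨hab, le_rfl⟩).symm

/-- Linear combinations of solutions are solutions. -/
lemma sol_sub_mul {N : ℕ} {V U w : ℝ → ℝ} (c : ℝ) (hU : IsSolO N V U) (hw : IsSolO N V w) :
    IsSolO N V (fun t => w t - c * U t) := by
  constructor
  · exact hw.1.sub (contDiffOn_const.mul hU.1)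
  · intro t ht
    have htpos : (0:ℝ) < t := ht
    have hg1 : ∀ x ∈ Ioi (0:ℝ), HasDerivAt (fun t => w t - c * U t)
        (deriv w x - c * deriv U x) x := fun x hx =>
      (sol_hasDerivAt hw hx).1.sub ((sol_hasDerivAt hU hx).1.const_mul c)
    have hdg : ∀ x ∈ Ioi (0:ℝ), deriv (fun t => w t - c * U t) x
        = deriv w x - c * deriv U x := fun x hx => (hg1 x hx).deriv
    have hg2 : HasDerivAt (deriv (fun t => w t - c * U t))
        (deriv (deriv w) t - c * deriv (deriv U) t) t := by
      have base : HasDerivAt (fun x => deriv w x - c * deriv U x)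
          (deriv (deriv w) t - c * deriv (deriv U) t) t :=
        (sol_hasDerivAt hw htpos).2.sub ((sol_hasDerivAt hU htpos).2.const_mul c)
      apply base.congr_of_eventuallyEq
      filter_upwards [isOpen_Ioi.mem_nhds htpos] with x hx
      exact hdg x hx
    rw [hg2.deriv, hdg t ht]
    have h1 := hw.2 t ht
    have h2 := hU.2 t ht
    linear_combination h1 - c * h2

set_option maxHeartbeats 1000000 in
/-- any solution of (O) which is `o(r^{A⁻(λ₁)})` (resp.
`o(r^{-(N-2)/2}|log r|)` when `λ₁ = λ*`) as `r → 0⁺` is a multiple of `U`. -/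
theorem stmt1 (N : ℕ) (hN : 2 ≤ N) (V : ℝ → ℝ) (hV : ContinuousOn V (Ioi 0))
    (θ l1 l2 : ℝ) (hθ : 0 < θ) (hl1 : lamStar N ≤ l1) (hl2 : lamStar N ≤ l2)
    (hcond : CondV V θ l1 l2)
    (U : ℝ → ℝ) (hU : IsSolO N V U)
    (hUasym : Tendsto (fun r => U r / r ^ Aplus N l1) (nhdsWithin 0 (Ioi 0)) (nhds 1))
    (w : ℝ → ℝ) (hw : IsSolO N V w)
    (hwo1 : lamStar N < l1 →
      w =o[nhdsWithin 0 (Ioi 0)] fun r : ℝ => r ^ Aminus N l1)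
    (hwo2 : l1 = lamStar N →
      w =o[nhdsWithin 0 (Ioi 0)] fun r : ℝ => r ^ (-((N : ℝ) - 2) / 2) * |Real.log r|) :
    ∃ c : ℝ, ∀ r ∈ Ioi (0 : ℝ), w r = c * U r := by
  have hN2 : (2:ℝ) ≤ (N:ℝ) := by exact_mod_cast hN
  set d : ℝ := Real.sqrt (((N : ℝ) - 2) ^ 2 + 4 * l1) with hd
  have hlam : lamStar N = -((N : ℝ) - 2) ^ 2 / 4 := rfl
  have hDnn : 0 ≤ ((N : ℝ) - 2) ^ 2 + 4 * l1 := by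
    rw [hlam] at hl1; linarith
  have hd0 : 0 ≤ d := Real.sqrt_nonneg _
  have hd2 : d ^ 2 = ((N : ℝ) - 2) ^ 2 + 4 * l1 := Real.sq_sqrt hDnn
  have hA : Aplus N l1 = (-((N:ℝ)-2) + d)/2 := rfl
  have hA' : Aminus N l1 = (-((N:ℝ)-2) - d)/2 := rfl
  -- the region where `U` is comparable to `r^{A⁺}`
  have hev : ∀ᶠ r in nhdsWithin (0:ℝ) (Ioi 0), U r / r ^ Aplus N l1 ∈ Ioo (1/2 : ℝ) 2 :=
    hUasym (Ioo_mem_nhds (by norm_num) (by norm_num))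
  obtain ⟨δ0, hδ0pos, hδ0⟩ :
      ∃ δ > (0:ℝ), ∀ r ∈ Ioo (0:ℝ) δ, U r / r ^ Aplus N l1 ∈ Ioo (1/2 : ℝ) 2 := by
    rw [eventually_nhdsWithin_iff, Metric.eventually_nhds_iff] at hev
    obtain ⟨ε, hε, hball⟩ := hev
    refine ⟨ε, hε, fun r hr => hball ?_ hr.1⟩
    rw [Real.dist_eq, sub_zero, abs_of_pos hr.1]
    exact hr.2
  set δ : ℝ := min δ0 1 with hδdef
  have hδpos : 0 < δ := lt_min hδ0pos one_pos
  have hδ1 : δ ≤ 1 := min_le_right _ _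
  have hδa : ∀ r ∈ Ioo (0:ℝ) δ, U r / r ^ Aplus N l1 ∈ Ioo (1/2 : ℝ) 2 :=
    fun r hr => hδ0 r ⟨hr.1, lt_of_lt_of_le hr.2 (min_le_left _ _)⟩
  have hUpos : ∀ r ∈ Ioo (0:ℝ) δ, 0 < U r := by
    intro r hr
    have hrp : 0 < r ^ Aplus N l1 := Real.rpow_pos_of_pos hr.1 _
    have h1 := (hδa r hr).1
    have h2 : (1:ℝ)/2 * r ^ Aplus N l1 < U r := (lt_div_iff₀ hrp).mp h1
    nlinarith
  have hUub : ∀ r ∈ Ioo (0:ℝ) δ, U r < 2 * r ^ Aplus N l1 := by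
    intro r hr
    have hrp : 0 < r ^ Aplus N l1 := Real.rpow_pos_of_pos hr.1 _
    exact (div_lt_iff₀ hrp).mp (hδa r hr).2
  -- lower bound for the integrand
  have hlow : ∀ r ∈ Ioo (0:ℝ) δ, (1/4 : ℝ) * r ^ (-1 - d) ≤ r ^ ((1:ℝ)-(N:ℝ)) / U r ^ 2 := by
    intro r hr
    have hrp : 0 < r ^ Aplus N l1 := Real.rpow_pos_of_pos hr.1 _
    have hU2 : 0 < U r ^ 2 := pow_pos (hUpos r hr) 2
    have key : r ^ ((1:ℝ)-(N:ℝ)) = r ^ (-1-d) * (r ^ Aplus N l1 * r ^ Aplus N l1) := by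
      rw [← Real.rpow_add hr.1, ← Real.rpow_add hr.1]
      congr 1
      rw [hA]; ring
    have hmd : 0 < r ^ (-1-d : ℝ) := Real.rpow_pos_of_pos hr.1 _
    rw [key, le_div_iff₀ hU2]
    have hub := hUub r hr
    have hpos := hUpos r hr
    have hU4 : U r ^ 2 ≤ 4 * (r ^ Aplus N l1 * r ^ Aplus N l1) := by nlinarith
    nlinarith [mul_le_mul_of_nonneg_left hU4 (le_of_lt hmd)]
  -- the Wronskian is constant
  set r1 : ℝ := δ/2 with hr1def
  have hr1mem : r1 ∈ Ioo (0:ℝ) δ := ⟨by positivity, half_lt_self hδpos⟩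
  set Wf : ℝ → ℝ := fun t => t ^ ((N:ℝ)-1) * (deriv w t * U t - w t * deriv U t) with hWf
  set c0 : ℝ := Wf r1 with hc0def
  have hWconst : ∀ r, 0 < r → Wf r = c0 :=
    fun r hr => const_of_derivAt_zero (fun x hx => wronskian_hasDerivAt_zero hU hw hx) hr hr1mem.1
  set h : ℝ → ℝ := fun r => w r / U r with hh
  have hhd : ∀ r ∈ Ioo (0:ℝ) δ, HasDerivAt h (c0 * (r ^ ((1:ℝ)-(N:ℝ)) / U r ^ 2)) r := by
    intro r hr
    have hU0 : U r ≠ 0 := ne_of_gt (hUpos r hr)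
    have hd1 := ((sol_hasDerivAt hw hr.1).1.div (sol_hasDerivAt hU hr.1).1 hU0)
    have hrr : r ^ ((N:ℝ)-1) * r ^ ((1:ℝ)-(N:ℝ)) = 1 := by
      rw [← Real.rpow_add hr.1]
      norm_num
    have hwc := hWconst r hr.1
    rw [hWf] at hwc
    simp only at hwc
    have hX : deriv w r * U r - w r * deriv U r = c0 * r ^ ((1:ℝ)-(N:ℝ)) := by
      rw [← hwc, mul_comm (r ^ ((N:ℝ)-1)) _, mul_assoc, hrr, mul_one]
    refine hd1.congr_deriv (Eq.symm ?_)
    rw [hX, mul_div_assoc]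
  -- FTC for `h = w/U`
  have hcont : ∀ a b : ℝ, a ∈ Ioo (0:ℝ) δ → b ∈ Ioo (0:ℝ) δ → a ≤ b →
      ContinuousOn (fun s => s ^ ((1:ℝ)-(N:ℝ)) / U s ^ 2) (Icc a b) := by
    intro a b ha hb hab
    have hss : Icc a b ⊆ Ioo (0:ℝ) δ :=
      fun x hx => ⟨lt_of_lt_of_le ha.1 hx.1, lt_of_le_of_lt hx.2 hb.2⟩
    apply ContinuousOn.div
    · exact ContinuousOn.rpow_const continuousOn_id
        (fun x hx => Or.inl (ne_of_gt (hss hx).1))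
    · exact (hU.1.continuousOn.mono (fun x hx => mem_Ioi.mpr (hss hx).1)).pow 2
    · exact fun x hx => ne_of_gt (pow_pos (hUpos x (hss hx)) 2)
  have hInteg : ∀ a ∈ Ioo (0:ℝ) δ, a ≤ r1 →
      IntervalIntegrable (fun s => s ^ ((1:ℝ)-(N:ℝ)) / U s ^ 2) volume a r1 := by
    intro a ha hale
    apply ContinuousOn.intervalIntegrable
    rw [uIcc_of_le hale]
    exact hcont a r1 ha hr1mem hale
  have hFTC : ∀ a ∈ Ioo (0:ℝ) δ, a ≤ r1 →
      h r1 - h a = c0 * ∫ s in a..r1, s ^ ((1:ℝ)-(N:ℝ)) / U s ^ 2 := by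
    intro a ha hale
    have hss : Icc a r1 ⊆ Ioo (0:ℝ) δ :=
      fun x hx => ⟨lt_of_lt_of_le ha.1 hx.1, lt_of_le_of_lt hx.2 hr1mem.2⟩
    rw [← intervalIntegral.integral_const_mul]
    refine (intervalIntegral.integral_eq_sub_of_hasDerivAt
      (fun x hx => hhd x (hss ((uIcc_of_le hale) ▸ hx))) ?_).symm
    apply ContinuousOn.intervalIntegrable
    rw [uIcc_of_le hale]
    exact continuousOn_const.mul (hcont a r1 ha hr1mem hale)
  -- the Wronskian vanishes
  have hIpos : ∀ a ∈ Ioo (0:ℝ) δ, a ≤ r1 →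
      (1/4 : ℝ) * ∫ s in a..r1, s ^ (-1-d : ℝ) ≤ ∫ s in a..r1, s ^ ((1:ℝ)-(N:ℝ)) / U s ^ 2 := by
    intro a ha hale
    rw [← intervalIntegral.integral_const_mul]
    apply intervalIntegral.integral_mono_on hale _ (hInteg a ha hale)
    · intro x hx
      exact hlow x ⟨lt_of_lt_of_le ha.1 hx.1, lt_of_le_of_lt hx.2 hr1mem.2⟩
    · apply ContinuousOn.intervalIntegrable
      apply continuousOn_const.mul
      apply ContinuousOn.rpow_const continuousOn_id
      intro x hx
      rw [uIcc_of_le hale] at hx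
      exact Or.inl (ne_of_gt (lt_of_lt_of_le ha.1 hx.1))
  have habs : ∀ a ∈ Ioo (0:ℝ) δ, a ≤ r1 →
      |c0| * ∫ s in a..r1, s ^ ((1:ℝ)-(N:ℝ)) / U s ^ 2 ≤ |h r1| + |h a| := by
    intro a ha hale
    have hnn : 0 ≤ ∫ s in a..r1, s ^ ((1:ℝ)-(N:ℝ)) / U s ^ 2 := by
      refine intervalIntegral.integral_nonneg hale (fun x hx => ?_)
      have hxm : x ∈ Ioo (0:ℝ) δ := ⟨lt_of_lt_of_le ha.1 hx.1, lt_of_le_of_lt hx.2 hr1mem.2⟩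
      have h1 := hUpos x hxm
      have h2 : (0:ℝ) < x ^ ((1:ℝ)-(N:ℝ)) := Real.rpow_pos_of_pos hxm.1 _
      positivity
    have := hFTC a ha hale
    have e1 : |h r1 - h a| = |c0| * ∫ s in a..r1, s ^ ((1:ℝ)-(N:ℝ)) / U s ^ 2 := by
      rw [this, abs_mul, abs_of_nonneg hnn]
    rw [← e1]
    exact abs_sub _ _
  have hc0 : c0 = 0 := by
    by_contra hc0ne
    rcases eq_or_lt_of_le hl1 with heq | hlt
    · -- λ₁ = λ*, logarithmic case
      have harg : ((N:ℝ)-2)^2 + 4*l1 = 0 := by rw [← heq, hlam]; ring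
      have hd00 : d = 0 := by rw [hd, harg, Real.sqrt_zero]
      have hA0 : Aplus N l1 = -((N:ℝ)-2)/2 := by rw [hA, hd00]; ring
      have hrpowinv : ∀ x : ℝ, x ^ (-1:ℝ) = x⁻¹ := fun x => by
        rw [show (-1:ℝ) = ((-1:ℤ):ℝ) by norm_num, Real.rpow_intCast, zpow_neg_one]
      have hIlog : ∀ a ∈ Ioo (0:ℝ) δ, a ≤ r1 →
          Real.log r1 - Real.log a ≤ ∫ s in a..r1, s ^ (-1-d : ℝ) := by
        intro a ha hale
        have hnot : (0:ℝ) ∉ uIcc a r1 := by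
          simp [Set.uIcc_of_le hale]; intro hcon; linarith [ha.1]
        have e2 : ∫ s in a..r1, s ^ (-1-d : ℝ) = ∫ s in a..r1, s⁻¹ := by
          apply intervalIntegral.integral_congr
          intro x _
          show x ^ (-1-d : ℝ) = x⁻¹
          rw [show (-1 - d : ℝ) = (-1:ℝ) by rw [hd00]; ring, hrpowinv]
        rw [e2, integral_inv hnot, Real.log_div (ne_of_gt hr1mem.1) (ne_of_gt ha.1)]
      have key : ∀ a ∈ Ioo (0:ℝ) r1,
          (|c0|/4) * (1 + Real.log r1 * (-Real.log a)⁻¹) - |h r1| * (-Real.log a)⁻¹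
            ≤ |h a| * (-Real.log a)⁻¹ := by
        intro a ha
        have haδ : a ∈ Ioo (0:ℝ) δ := ⟨ha.1, lt_trans ha.2 hr1mem.2⟩
        have ha1 : a < 1 := lt_of_lt_of_le haδ.2 hδ1
        have hlog : Real.log a < 0 := Real.log_neg ha.1 ha1
        have hnl : 0 < -Real.log a := by linarith
        have hale : a ≤ r1 := le_of_lt ha.2
        have hI1 := hIlog a haδ hale
        have hI2 := hIpos a haδ hale
        have H := habs a haδ hale
        have hc0nn : (0:ℝ) < |c0| := abs_pos.mpr hc0ne
        have step1 : |c0| * ((1/4:ℝ) * (Real.log r1 - Real.log a))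
            ≤ |c0| * ∫ s in a..r1, s ^ ((1:ℝ)-(N:ℝ)) / U s ^ 2 := by
          apply mul_le_mul_of_nonneg_left _ (le_of_lt hc0nn)
          calc (1/4:ℝ) * (Real.log r1 - Real.log a)
              ≤ (1/4:ℝ) * ∫ s in a..r1, s ^ (-1-d : ℝ) := by linarith
            _ ≤ _ := hI2
        have step2 : |c0| * ((1/4:ℝ) * (Real.log r1 - Real.log a)) - |h r1| ≤ |h a| := by
          linarith
        have step3 := mul_le_mul_of_nonneg_right step2 (le_of_lt (inv_pos.mpr hnl))
        have hln : (-Real.log a) * (-Real.log a)⁻¹ = 1 := mul_inv_cancel₀ (ne_of_gt hnl)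
        calc (|c0|/4) * (1 + Real.log r1 * (-Real.log a)⁻¹) - |h r1| * (-Real.log a)⁻¹
            = (|c0| * ((1/4:ℝ) * (Real.log r1 - Real.log a)) - |h r1|) * (-Real.log a)⁻¹ := by
              linear_combination (-(|c0|/4)) * hln
          _ ≤ |h a| * (-Real.log a)⁻¹ := step3
      -- tendsto contradiction
      have hinv : Tendsto (fun r : ℝ => (-Real.log r)⁻¹)
          (nhdsWithin (0:ℝ) (Ioi 0)) (nhds 0) := by
        have h1 : Tendsto (fun r : ℝ => -Real.log r) (nhdsWithin (0:ℝ) (Ioi 0)) atTop :=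
          tendsto_neg_atBot_atTop.comp Real.tendsto_log_nhdsGT_zero
        exact h1.inv_tendsto_atTop
      have T0 := (hwo2 heq.symm).tendsto_div_nhds_zero
      have T1 := T0.div hUasym one_ne_zero
      rw [zero_div] at T1
      have hcongr : ∀ᶠ r in nhdsWithin (0:ℝ) (Ioi 0),
          (w r / (r ^ (-((N:ℝ)-2)/2) * |Real.log r|)) / (U r / r ^ Aplus N l1)
            = h r * (-Real.log r)⁻¹ := by
        filter_upwards [Ioo_mem_nhdsGT hδpos] with r hr
        have hU0 : U r ≠ 0 := ne_of_gt (hUpos r hr)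
        have hr1' : r < 1 := lt_of_lt_of_le hr.2 hδ1
        have hlog : Real.log r < 0 := Real.log_neg hr.1 hr1'
        have habsl : |Real.log r| = -Real.log r := abs_of_neg hlog
        have hp0 : r ^ (-((N:ℝ)-2)/2) ≠ 0 := ne_of_gt (Real.rpow_pos_of_pos hr.1 _)
        rw [hA0, habsl, hh]
        have hX : r ^ (-((N:ℝ)-2)/2) ≠ 0 := hp0
        rw [div_div_div_comm, mul_div_cancel_left₀ _ hX, div_eq_mul_inv]
      have T2 : Tendsto (fun r => h r * (-Real.log r)⁻¹)
          (nhdsWithin (0:ℝ) (Ioi 0)) (nhds 0) := T1.congr' hcongr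
      have T3 : Tendsto (fun r => |h r * (-Real.log r)⁻¹|)
          (nhdsWithin (0:ℝ) (Ioi 0)) (nhds 0) := by
        have := T2.abs
        rwa [abs_zero] at this
      have hLt : Tendsto
          (fun r : ℝ => (|c0|/4) * (1 + Real.log r1 * (-Real.log r)⁻¹)
            - |h r1| * (-Real.log r)⁻¹)
          (nhdsWithin (0:ℝ) (Ioi 0)) (nhds ((|c0|/4) * (1 + Real.log r1 * 0) - |h r1| * 0)) := by
        exact ((tendsto_const_nhds.add (hinv.const_mul (Real.log r1))).const_mul
          (|c0|/4)).sub (hinv.const_mul (|h r1|))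
      rw [show (|c0|/4) * (1 + Real.log r1 * 0) - |h r1| * 0 = |c0|/4 by ring] at hLt
      have hbound : ∀ᶠ r in nhdsWithin (0:ℝ) (Ioi 0),
          (|c0|/4) * (1 + Real.log r1 * (-Real.log r)⁻¹) - |h r1| * (-Real.log r)⁻¹
            ≤ |h r * (-Real.log r)⁻¹| := by
        filter_upwards [Ioo_mem_nhdsGT hr1mem.1] with r hr
        have hr1' : r < 1 := lt_of_lt_of_le (lt_trans hr.2 hr1mem.2) hδ1
        have hlog : Real.log r < 0 := Real.log_neg hr.1 hr1'
        have hnl : (0:ℝ) ≤ (-Real.log r)⁻¹ := le_of_lt (inv_pos.mpr (by linarith))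
        conv_rhs => rw [abs_mul, abs_of_nonneg hnl]
        exact key r hr
      have hfin := le_of_tendsto_of_tendsto hLt T3 hbound
      have : (0:ℝ) < |c0|/4 := by
        have := abs_pos.mpr hc0ne
        positivity
      linarith
    · -- λ₁ > λ*, power case
      have hdpos : 0 < d := Real.sqrt_pos.mpr (by rw [hlam] at hlt; linarith)
      have hIval : ∀ a ∈ Ioo (0:ℝ) δ, a ≤ r1 →
          (a ^ (-d) - r1 ^ (-d)) / d ≤ ∫ s in a..r1, s ^ (-1-d : ℝ) := by
        intro a ha hale
        rw [integral_rpow (Or.inr ⟨ne_of_lt (by linarith), by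
          simp [Set.uIcc_of_le hale]; intro hcon; linarith [ha.1]⟩)]
        apply le_of_eq
        have he : (-1 - d) + 1 = -d := by ring
        rw [he, div_eq_div_iff (ne_of_gt hdpos) (by linarith)]
        ring
      have key : ∀ a ∈ Ioo (0:ℝ) r1,
          (|c0|/4) * ((1 - r1 ^ (-d) * a ^ d) / d) - |h r1| * a ^ d ≤ |h a| * a ^ d := by
        intro a ha
        have haδ : a ∈ Ioo (0:ℝ) δ := ⟨ha.1, lt_trans ha.2 hr1mem.2⟩
        have hale : a ≤ r1 := le_of_lt ha.2
        have hI1 := hIval a haδ hale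
        have hI2 := hIpos a haδ hale
        have H := habs a haδ hale
        have hc0nn : (0:ℝ) < |c0| := abs_pos.mpr hc0ne
        have step1 : |c0| * ((1/4:ℝ) * ((a ^ (-d) - r1 ^ (-d)) / d))
            ≤ |c0| * ∫ s in a..r1, s ^ ((1:ℝ)-(N:ℝ)) / U s ^ 2 := by
          apply mul_le_mul_of_nonneg_left _ (le_of_lt hc0nn)
          calc (1/4:ℝ) * ((a ^ (-d) - r1 ^ (-d)) / d)
              ≤ (1/4:ℝ) * ∫ s in a..r1, s ^ (-1-d : ℝ) := by linarith
            _ ≤ _ := hI2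
        have step2 : |c0| * ((1/4:ℝ) * ((a ^ (-d) - r1 ^ (-d)) / d)) - |h r1| ≤ |h a| := by
          linarith
        have step3 := mul_le_mul_of_nonneg_right step2
          (Real.rpow_nonneg (le_of_lt ha.1) d)
        have haa : a ^ (-d) * a ^ d = 1 := by
          rw [← Real.rpow_add ha.1, neg_add_cancel, Real.rpow_zero]
        calc (|c0|/4) * ((1 - r1 ^ (-d) * a ^ d) / d) - |h r1| * a ^ d
            = (|c0| * ((1/4:ℝ) * ((a ^ (-d) - r1 ^ (-d)) / d)) - |h r1|) * a ^ d := by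
              linear_combination (-(|c0|/4/d)) * haa
          _ ≤ |h a| * a ^ d := step3
      -- tendsto contradiction
      have T0 := (hwo1 hlt).tendsto_div_nhds_zero
      have T1 := T0.div hUasym one_ne_zero
      rw [zero_div] at T1
      have hcongr : ∀ᶠ r in nhdsWithin (0:ℝ) (Ioi 0),
          (w r / r ^ Aminus N l1) / (U r / r ^ Aplus N l1) = h r * r ^ d := by
        filter_upwards [Ioo_mem_nhdsGT hδpos] with r hr
        have hU0 : U r ≠ 0 := ne_of_gt (hUpos r hr)
        have e1 : r ^ Aplus N l1 = r ^ Aminus N l1 * r ^ d := by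
          rw [← Real.rpow_add hr.1]
          congr 1
          rw [hA, hA']; ring
        have hm0 : r ^ Aminus N l1 ≠ 0 := ne_of_gt (Real.rpow_pos_of_pos hr.1 _)
        have hd0' : r ^ d ≠ 0 := ne_of_gt (Real.rpow_pos_of_pos hr.1 _)
        rw [hh, e1]
        field_simp
      have T2 : Tendsto (fun r => h r * r ^ d) (nhdsWithin (0:ℝ) (Ioi 0)) (nhds 0) :=
        T1.congr' hcongr
      have T3 : Tendsto (fun r => |h r * r ^ d|) (nhdsWithin (0:ℝ) (Ioi 0)) (nhds 0) := by
        have := T2.abs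
        rwa [abs_zero] at this
      have hr0 : Tendsto (fun r : ℝ => r ^ d) (nhdsWithin (0:ℝ) (Ioi 0)) (nhds 0) := by
        have h0 : Tendsto (fun r : ℝ => r ^ d) (nhds 0) (nhds ((0:ℝ) ^ d)) :=
          (Real.continuousAt_rpow_const 0 d (Or.inr (le_of_lt hdpos))).tendsto
        rw [Real.zero_rpow (ne_of_gt hdpos)] at h0
        exact h0.mono_left nhdsWithin_le_nhds
      have hLt : Tendsto
          (fun r : ℝ => (|c0|/4) * ((1 - r1 ^ (-d) * r ^ d) / d) - |h r1| * r ^ d)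
          (nhdsWithin (0:ℝ) (Ioi 0)) (nhds ((|c0|/4) * (1 / d))) := by
        have t1 : Tendsto (fun r : ℝ => (|c0|/4) * ((1 - r1 ^ (-d) * r ^ d) / d))
            (nhdsWithin (0:ℝ) (Ioi 0)) (nhds ((|c0|/4) * ((1 - r1 ^ (-d) * 0) / d))) :=
          ((tendsto_const_nhds.sub (hr0.const_mul (r1 ^ (-d)))).div_const d).const_mul _
        have t2 : Tendsto (fun r : ℝ => |h r1| * r ^ d)
            (nhdsWithin (0:ℝ) (Ioi 0)) (nhds (|h r1| * 0)) := hr0.const_mul _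
        have := t1.sub t2
        simpa using this
      have hbound : ∀ᶠ r in nhdsWithin (0:ℝ) (Ioi 0),
          (|c0|/4) * ((1 - r1 ^ (-d) * r ^ d) / d) - |h r1| * r ^ d ≤ |h r * r ^ d| := by
        filter_upwards [Ioo_mem_nhdsGT hr1mem.1] with r hr
        conv_rhs => rw [abs_mul, abs_of_nonneg (Real.rpow_nonneg (le_of_lt hr.1) d)]
        exact key r hr
      have hfin := le_of_tendsto_of_tendsto hLt T3 hbound
      have : (0:ℝ) < (|c0|/4) * (1 / d) := by
        have := abs_pos.mpr hc0ne
        positivity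
      linarith
  -- conclude: `h` is constant near `0`
  have hval : ∀ a ∈ Ioo (0:ℝ) δ, a ≤ r1 → w a = h r1 * U a := by
    intro a ha hale
    have := hFTC a ha hale
    rw [hc0, zero_mul, sub_eq_zero] at this
    have hU0 : U a ≠ 0 := ne_of_gt (hUpos a ha)
    rw [this]
    show w a = w a / U a * U a
    exact (div_mul_cancel₀ _ hU0).symm
  refine ⟨h r1, fun r hr => ?_⟩
  rcases le_or_gt r r1 with hle | hgt
  · exact hval r ⟨hr, lt_of_le_of_lt hle hr1mem.2⟩ hle
  · -- use forward uniqueness from `t1 = r1/2`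
    have hgsol : IsSolO N V (fun t => w t - h r1 * U t) := sol_sub_mul (h r1) hU hw
    have hz : ∀ᶠ t in nhds (r1/2), w t - h r1 * U t = 0 := by
      filter_upwards [isOpen_Ioo.mem_nhds
        (⟨by positivity, half_lt_self hr1mem.1⟩ : r1/2 ∈ Ioo (0:ℝ) r1)] with t ht
      have := hval t ⟨ht.1, lt_trans ht.2 hr1mem.2⟩ (le_of_lt ht.2)
      linarith
    have := ode_ext hN hV hgsol (by positivity : (0:ℝ) < r1/2) hz
      (le_of_lt (lt_trans (half_lt_self hr1mem.1) hgt))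
    linarith
end
end

section
/- Let N ≥ 2 be an integer, let V : (0,∞) → ℝ be continuous, and let U ∈ C²((0,∞)) be a solution of equation (O) with U(r) > 0 for all r ∈ (0,∞). Then for every φ ∈ C_c^∞(ℝ^N∖{0}) one has the ground-state identity ∫_{ℝ^N} |∇(φ(x)/U(|x|))|² U(|x|)² dx = ∫_{ℝ^N} (|∇φ(x)|² + V(|x|)φ(x)²) dx. In particular, ∫_{ℝ^N} (|∇φ|² + V(|x|)φ²) dx ≥ 0 for all φ ∈ C_c^∞(ℝ^N∖{0}). -/
open MeasureTheory Metric Filter Set Asymptotics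

noncomputable section

open scoped Manifold ContDiff

lemma norm_gradient_sq' {N : ℕ} (f : Euc N → ℝ) (x : Euc N) :
    ‖gradient f x‖^2 = ∑ i, (fderiv ℝ f x (EuclideanSpace.single i 1))^2 := by
  have h : ∀ i, gradient f x i = fderiv ℝ f x (EuclideanSpace.single i 1) := by
    intro i
    have : inner ℝ (gradient f x) (EuclideanSpace.single i (1:ℝ)) = fderiv ℝ f x (EuclideanSpace.single i 1) := by
      rw [gradient]; exact InnerProductSpace.toDual_symm_apply
    rw [EuclideanSpace.inner_single_right] at this
    simpa using this
  rw [EuclideanSpace.norm_eq, Real.sq_sqrt (by positivity)]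
  simp [h]

lemma hasFDerivAt_norm' {N : ℕ} {x : Euc N} (hx : x ≠ 0) :
    HasFDerivAt (fun y : Euc N => ‖y‖) (‖x‖⁻¹ • innerSL ℝ x) x := by
  have h1 : HasFDerivAt (fun y : Euc N => ‖y‖^2) ((2:ℕ) • (innerSL ℝ x)) x :=
    (hasStrictFDerivAt_norm_sq x).hasFDerivAt
  have hxn : ‖x‖ ≠ 0 := norm_ne_zero_iff.2 hx
  have h2 : HasDerivAt Real.sqrt (1 / (2 * Real.sqrt (‖x‖^2))) (‖x‖^2) :=
    Real.hasDerivAt_sqrt (by positivity)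
  have h3 := h2.comp_hasFDerivAt x h1
  have he : (Real.sqrt ∘ fun y : Euc N => ‖y‖^2) = fun y : Euc N => ‖y‖ := by
    ext y; simp [Function.comp, Real.sqrt_sq (norm_nonneg y)]
  rw [he] at h3
  refine h3.congr_fderiv ?_
  rw [Real.sqrt_sq (norm_nonneg x)]
  ext v
  simp [ContinuousLinearMap.smul_apply]
  field_simp

lemma contDiff_of_two_opens {E F : Type*} [NormedAddCommGroup E] [NormedSpace ℝ E]
    [NormedAddCommGroup F] [NormedSpace ℝ F] {f : E → F} {s t : Set E} {n : ℕ∞}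
    (hs : IsOpen s) (ht : IsOpen t) (hcov : ∀ x, x ∈ s ∨ x ∈ t)
    (h1 : ContDiffOn ℝ n f s) (h2 : ContDiffOn ℝ n f t) : ContDiff ℝ n f := by
  rw [← contDiffOn_univ]
  intro x _
  rcases hcov x with hx | hx
  · exact ((h1 x hx).contDiffAt (hs.mem_nhds hx)).contDiffWithinAt
  · exact ((h2 x hx).contDiffAt (ht.mem_nhds hx)).contDiffWithinAt

lemma continuous_of_two_opens {E F : Type*} [TopologicalSpace E] [TopologicalSpace F]
    {f : E → F} {s t : Set E}
    (hs : IsOpen s) (ht : IsOpen t) (hcov : ∀ x, x ∈ s ∨ x ∈ t)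
    (h1 : ContinuousOn f s) (h2 : ContinuousOn f t) : Continuous f := by
  rw [continuous_iff_continuousAt]
  intro x
  rcases hcov x with hx | hx
  · exact (h1 x hx).continuousAt (hs.mem_nhds hx)
  · exact (h2 x hx).continuousAt (ht.mem_nhds hx)

lemma alg1 {n : ℕ} (a xx : Fin n → ℝ) (u0 u1 b r V0 : ℝ) (hr : r ≠ 0)
    (hx : ∑ i, xx i^2 = r^2) :
    (∑ i, (u0 * a i + b * (u1 * (r⁻¹ * xx i)))^2) + V0 * (b*u0)^2
    = u0^2 * (∑ i, (a i)^2) + (∑ i, (2*b*a i) * (u0*u1/r * xx i))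
      + (b^2*u1^2 + V0*(b*u0)^2) := by
  have h1 : ∀ i, (u0 * a i + b * (u1 * (r⁻¹ * xx i)))^2
      = u0^2*(a i)^2 + (2*b*a i)*(u0*u1/r*xx i) + (b*u1/r)^2 * (xx i)^2 := by
    intro i; field_simp; ring
  simp_rw [h1]
  rw [Finset.sum_add_distrib, Finset.sum_add_distrib, ← Finset.mul_sum, ← Finset.mul_sum, hx]
  rw [div_pow, div_mul_cancel₀ _ (pow_ne_zero 2 hr)]
  ring


lemma ibp_aux {N : ℕ} (f g : Euc N → ℝ) (v : Euc N)
    (hf : ContDiff ℝ 1 f) (hg : ContDiff ℝ 1 g) (hsf : HasCompactSupport f) :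
    ∫ x, f x * fderiv ℝ g x v = - ∫ x, fderiv ℝ f x v * g x := by
  have c1 : Continuous fun x => fderiv ℝ f x v :=
    (hf.continuous_fderiv one_ne_zero).clm_apply continuous_const
  have c2 : Continuous fun x => fderiv ℝ g x v :=
    (hg.continuous_fderiv one_ne_zero).clm_apply continuous_const
  have s1 : HasCompactSupport fun x => fderiv ℝ f x v * g x := by
    apply HasCompactSupport.mul_right
    exact (hsf.fderiv (𝕜 := ℝ)).comp_left (g := fun L : Euc N →L[ℝ] ℝ => L v) rfl
  have s2 : HasCompactSupport fun x => f x * fderiv ℝ g x v := hsf.mul_right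
  have s3 : HasCompactSupport fun x => f x * g x := hsf.mul_right
  apply integral_mul_fderiv_eq_neg_fderiv_mul_of_integrable
  · exact (c1.mul hg.continuous).integrable_of_hasCompactSupport s1
  · exact (hf.continuous.mul c2).integrable_of_hasCompactSupport s2
  · exact (hf.continuous.mul hg.continuous).integrable_of_hasCompactSupport s3
  · exact fun x _ => hf.differentiable one_ne_zero x
  · exact fun x _ => hg.differentiable one_ne_zero x

set_option maxHeartbeats 2000000 in
/-- the ground-state transform identity
`∫ |∇(φ/U(|·|))|² U(|·|)² = ∫ (|∇φ|² + V(|x|)φ²)` and the resulting nonnegativity of `H`. -/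
theorem stmt15 (N : ℕ) (hN : 2 ≤ N) (V : ℝ → ℝ) (hV : ContinuousOn V (Ioi 0))
    (U : ℝ → ℝ) (hU : IsSolO N V U) (hUpos : ∀ r ∈ Ioi (0 : ℝ), 0 < U r) :
    ∀ φ : Euc N → ℝ, IsTestFun φ →
      (∫ x : Euc N, ‖gradient (fun z : Euc N => φ z / U ‖z‖) x‖ ^ 2 * U ‖x‖ ^ 2)
          = (∫ x : Euc N, (‖gradient φ x‖ ^ 2 + V ‖x‖ * φ x ^ 2)) ∧
      0 ≤ ∫ x : Euc N, (‖gradient φ x‖ ^ 2 + V ‖x‖ * φ x ^ 2) := by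
  intro φ hφ
  obtain ⟨hφsm, hφcs, hφsupp⟩ := hφ
  obtain ⟨hUc, hODE⟩ := hU
  classical
  have hφ1 : ContDiff ℝ 1 φ := hφsm.of_le (by simp)
  set K := tsupport φ with hKdef
  have hKc : IsCompact K := hφcs
  set Ω : Set (Euc N) := {x : Euc N | x ≠ 0} with hΩdef
  have hΩo : IsOpen Ω := isOpen_ne
  have hKΩ : K ⊆ Ω := hφsupp
  -- choose ε
  obtain ⟨ε, hε, hεK⟩ : ∃ ε : ℝ, 0 < ε ∧ ∀ x ∈ K, 2 * ε ≤ ‖x‖ := by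
    rcases eq_empty_or_nonempty K with hKe | hKne
    · exact ⟨1, one_pos, by simp [hKe]⟩
    · obtain ⟨x₀, hx₀K, hmin⟩ := hKc.exists_isMinOn hKne continuous_norm.continuousOn
      have hx₀ : (0:ℝ) < ‖x₀‖ := norm_pos_iff.2 (hKΩ hx₀K)
      exact ⟨‖x₀‖ / 4, by linarith, fun x hx => by
        have : ‖x₀‖ ≤ ‖x‖ := hmin hx; linarith⟩
  -- cutoff χ
  have hdisj : Disjoint (closedBall (0 : Euc N) ε) K := by
    rw [Set.disjoint_left]
    intro x hx hxK
    rw [mem_closedBall, dist_zero_right] at hx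
    have := hεK x hxK
    linarith
  obtain ⟨χ, hχ0, hχ1, -⟩ := exists_contMDiffMap_zero_one_of_isClosed (n := (⊤ : ℕ∞)) (𝓘(ℝ, Euc N))
    isClosed_closedBall hKc.isClosed hdisj
  have hχsm : ContDiff ℝ ∞ (χ : Euc N → ℝ) := χ.contMDiff.contDiff
  have hχts : tsupport (χ : Euc N → ℝ) ⊆ {x : Euc N | ε ≤ ‖x‖} := by
    apply closure_minimal
    · intro x hx
      by_contra hc
      simp only [mem_setOf_eq, not_le] at hc
      exact hx (hχ0 (by rw [mem_closedBall, dist_zero_right]; linarith))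
    · exact IsClosed.preimage continuous_norm isClosed_Ici
  have hχΩ : tsupport (χ : Euc N → ℝ) ⊆ Ω := fun x hx => by
    have := hχts hx
    simp only [hΩdef, mem_setOf_eq]
    intro h0
    rw [h0] at this
    simp at this
    linarith

  -- facts about U
  set U' : ℝ → ℝ := deriv U with hU'def
  set U'' : ℝ → ℝ := deriv U' with hU''def
  have hU'c : ContDiffOn ℝ 1 U' (Ioi 0) := hUc.deriv_of_isOpen isOpen_Ioi (by norm_num)
  have hd1 : ∀ r ∈ Ioi (0:ℝ), HasDerivAt U (U' r) r := fun r hr =>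
    ((hUc.differentiableOn (by norm_num) r hr).differentiableAt (isOpen_Ioi.mem_nhds hr)).hasDerivAt
  have hd2 : ∀ r ∈ Ioi (0:ℝ), HasDerivAt U' (U'' r) r := fun r hr =>
    ((hU'c.differentiableOn (by norm_num) r hr).differentiableAt (isOpen_Ioi.mem_nhds hr)).hasDerivAt
  have hU''cont : ContinuousOn U'' (Ioi 0) :=
    (hU'c.deriv_of_isOpen (m := 0) isOpen_Ioi (by norm_num)).continuousOn
  -- norm and u on Ω
  have hmaps : MapsTo (fun y : Euc N => ‖y‖) Ω (Ioi 0) := fun y hy => by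
    simpa using norm_pos_iff.2 hy
  have hnorm1 : ContDiffOn ℝ 1 (fun y : Euc N => ‖y‖) Ω := fun x hx =>
    (contDiffAt_norm (𝕜 := ℝ) (E := Euc N) (n := 1) hx).contDiffWithinAt
  have huC : ContDiffOn ℝ 1 (fun y : Euc N => U ‖y‖) Ω :=
    (hUc.of_le (by norm_num)).comp hnorm1 hmaps
  have hupos : ∀ x ∈ Ω, 0 < U ‖x‖ := fun x hx => hUpos _ (hmaps hx)
  have hDu : ∀ x ∈ Ω, HasFDerivAt (fun y : Euc N => U ‖y‖)
      (U' ‖x‖ • (‖x‖⁻¹ • innerSL ℝ x)) x := fun x hx =>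
    (hd1 _ (hmaps hx)).comp_hasFDerivAt x (hasFDerivAt_norm' hx)
  have happly : ∀ (x : Euc N) (c : ℝ) (i : Fin N),
      (c • (‖x‖⁻¹ • innerSL ℝ x)) (EuclideanSpace.single i 1) = c * (‖x‖⁻¹ * x i) := by
    intro x c i
    simp [ContinuousLinearMap.smul_apply, EuclideanSpace.inner_single_right, real_inner_comm]
  -- ψ
  set ψ : Euc N → ℝ := fun z => φ z / U ‖z‖ with hψdef
  have hψnotK : ∀ x, x ∉ K → ψ x = 0 := fun x hx => by
    simp [hψdef, image_eq_zero_of_notMem_tsupport hx]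
  have hφnotK : ∀ x, x ∉ K → φ x = 0 := fun x hx => image_eq_zero_of_notMem_tsupport hx
  have hψΩ : ContDiffOn ℝ 1 ψ Ω :=
    (hφ1.contDiffOn).div huC (fun x hx => (hupos x hx).ne')
  have hballK : ∀ x : Euc N, ‖x‖ < 2 * ε → x ∉ K := fun x hlt hx => by
    have := hεK x hx; linarith
  have hψball : ∀ x ∈ ball (0 : Euc N) (2*ε), ψ x = 0 := fun x hx => by
    rw [mem_ball, dist_zero_right] at hx
    exact hψnotK x (hballK x hx)
  have hcov : ∀ x : Euc N, x ∈ Ω ∨ x ∈ ball (0 : Euc N) (2*ε) := fun x => by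
    by_cases hx : x = 0
    · right; rw [hx, mem_ball, dist_self]; linarith
    · left; exact hx
  have hψ : ContDiff ℝ 1 ψ :=
    contDiff_of_two_opens hΩo isOpen_ball hcov hψΩ
      ((contDiffOn_const (c := (0:ℝ))).congr hψball)
  have htsψ : tsupport ψ ⊆ K := by
    apply closure_minimal _ hKc.isClosed
    intro x hx
    by_contra hc
    exact hx (hψnotK x hc)
  have hψcs : HasCompactSupport ψ := IsCompact.of_isClosed_subset hKc (isClosed_tsupport ψ) htsψ
  have hφψ : ∀ x, φ x = ψ x * U ‖x‖ := by
    intro x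
    by_cases hx : x = 0
    · have h0 : (0 : Euc N) ∉ K := fun h => (hKΩ h) rfl
      rw [hx]
      simp [hφnotK _ h0, hψnotK _ h0]
    · have hUne : U ‖x‖ ≠ 0 := (hupos x hx).ne'
      rw [hψdef]
      field_simp
  -- q and Q
  set q : ℝ → ℝ := fun r => U r * U' r / r with hqdef
  set q' : ℝ → ℝ := fun r => ((U' r * U' r + U r * U'' r) * r - U r * U' r) / r^2 with hq'def
  have hq : ∀ r ∈ Ioi (0:ℝ), HasDerivAt q (q' r) r := by
    intro r hr
    have h := ((hd1 r hr).mul (hd2 r hr)).div (hasDerivAt_id r) (ne_of_gt (mem_Ioi.1 hr))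
    simp only [id_eq, mul_one] at h
    exact h
  have hqc : ContDiffOn ℝ 1 q (Ioi 0) :=
    ((hUc.of_le (by norm_num)).mul hU'c).div contDiffOn_id (fun r hr => ne_of_gt (mem_Ioi.1 hr))
  have hqΩ : ContDiffOn ℝ 1 (fun y : Euc N => q ‖y‖) Ω := hqc.comp hnorm1 hmaps
  set Q : Euc N → ℝ := fun x => χ x * q ‖x‖ with hQdef
  have hQΩ : ContDiffOn ℝ 1 Q Ω := ((hχsm.of_le (by norm_num)).contDiffOn).mul hqΩ
  have hQ0 : ∀ x ∈ (tsupport (χ : Euc N → ℝ))ᶜ, Q x = 0 := fun x hx => by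
    simp [hQdef, image_eq_zero_of_notMem_tsupport hx]
  have hcov2 : ∀ x : Euc N, x ∈ Ω ∨ x ∈ (tsupport (χ : Euc N → ℝ))ᶜ := fun x => by
    by_cases hx : x = 0
    · right; intro h; exact (hχΩ h) hx
    · left; exact hx
  have hQ : ContDiff ℝ 1 Q :=
    contDiff_of_two_opens hΩo (isOpen_compl_iff.2 (isClosed_tsupport _)) hcov2 hQΩ
      ((contDiffOn_const (c := (0:ℝ))).congr hQ0)
  set g : Fin N → Euc N → ℝ := fun i x => Q x * x i with hgdef
  have hgC : ∀ i, ContDiff ℝ 1 (g i) := fun i =>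
    hQ.mul ((EuclideanSpace.proj (𝕜 := ℝ) (i := i)).contDiff)
  have hgval : ∀ (i : Fin N), ∀ x ∈ K, g i x = q ‖x‖ * x i := fun i x hx => by
    simp [hgdef, hQdef, hχ1 hx]

  -- coordinate facts
  have hsumx : ∀ x : Euc N, ∑ i, (x i)^2 = ‖x‖^2 := fun x => by
    rw [EuclideanSpace.norm_eq, Real.sq_sqrt (by positivity)]
    simp [sq_abs]
  have hψdiff : ∀ x, HasFDerivAt ψ (fderiv ℝ ψ x) x := fun x =>
    (hψ.differentiable one_ne_zero x).hasFDerivAt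
  have hdφi : ∀ x ∈ Ω, ∀ i : Fin N, fderiv ℝ φ x (EuclideanSpace.single i 1)
      = U ‖x‖ * fderiv ℝ ψ x (EuclideanSpace.single i 1)
        + ψ x * (U' ‖x‖ * (‖x‖⁻¹ * x i)) := by
    intro x hx i
    have hφeq : φ = fun y => ψ y * U ‖y‖ := funext hφψ
    have h : HasFDerivAt (fun y => ψ y * U ‖y‖) _ x := (hψdiff x).mul (hDu x hx)
    rw [hφeq, h.fderiv]
    simp only [ContinuousLinearMap.add_apply, ContinuousLinearMap.smul_apply, smul_eq_mul, happly]
    ring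
  have hzeroK : ∀ x, x ∉ K → fderiv ℝ φ x = 0 ∧ fderiv ℝ ψ x = 0 ∧
      fderiv ℝ (fun y => ψ y^2) x = 0 := by
    intro x hx
    have hopen : Kᶜ ∈ nhds x := (hKc.isClosed.isOpen_compl).mem_nhds hx
    have hφ0 : φ =ᶠ[nhds x] (fun _ => (0:ℝ)) :=
      eventually_of_mem hopen (fun y hy => hφnotK y hy)
    have hψ0 : ψ =ᶠ[nhds x] (fun _ => (0:ℝ)) :=
      eventually_of_mem hopen (fun y hy => hψnotK y hy)
    have hψ20 : (fun y => ψ y^2) =ᶠ[nhds x] (fun _ => (0:ℝ)) :=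
      hψ0.mono (fun y hy => by simp only at hy; simp [hy])
    refine ⟨?_, ?_, ?_⟩
    · rw [hφ0.fderiv_eq]; exact fderiv_const_apply 0
    · rw [hψ0.fderiv_eq]; exact fderiv_const_apply 0
    · rw [hψ20.fderiv_eq]; exact fderiv_const_apply 0
  have hdψ2 : ∀ (x : Euc N) (i : Fin N), fderiv ℝ (fun y => ψ y^2) x (EuclideanSpace.single i 1)
      = 2 * ψ x * fderiv ℝ ψ x (EuclideanSpace.single i 1) := by
    intro x i
    have heq : (fun y => ψ y^2) = fun y => ψ y * ψ y := by ext y; ring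
    have h : HasFDerivAt (fun y => ψ y * ψ y) _ x := (hψdiff x).mul (hψdiff x)
    rw [heq, h.fderiv]
    simp only [ContinuousLinearMap.add_apply, ContinuousLinearMap.smul_apply, smul_eq_mul]
    ring
  set I1 : Euc N → ℝ :=
    fun x => U ‖x‖^2 * ∑ i, (fderiv ℝ ψ x (EuclideanSpace.single i 1))^2 with hI1def
  set I3 : Euc N → ℝ := fun x => ψ x^2 * U' ‖x‖^2 + V ‖x‖ * φ x^2 with hI3def
  have Hae : ∀ x ∈ Ω, (∑ i, (fderiv ℝ φ x (EuclideanSpace.single i 1))^2) + V ‖x‖ * φ x^2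
      = I1 x
        + (∑ i, fderiv ℝ (fun y => ψ y^2) x (EuclideanSpace.single i 1) * g i x)
        + I3 x := by
    intro x hx
    simp only [hI1def, hI3def]
    by_cases hxK : x ∈ K
    · have hrne : ‖x‖ ≠ 0 := norm_ne_zero_iff.2 hx
      have e1 : (∑ i, (fderiv ℝ φ x (EuclideanSpace.single i 1))^2)
          = ∑ i, (U ‖x‖ * fderiv ℝ ψ x (EuclideanSpace.single i 1)
            + ψ x * (U' ‖x‖ * (‖x‖⁻¹ * x i)))^2 :=
        Finset.sum_congr rfl fun i _ => by rw [hdφi x hx i]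
      have e2 : (∑ i, fderiv ℝ (fun y => ψ y^2) x (EuclideanSpace.single i 1) * g i x)
          = ∑ i, (2 * ψ x * fderiv ℝ ψ x (EuclideanSpace.single i 1))
            * (U ‖x‖ * U' ‖x‖ / ‖x‖ * x i) :=
        Finset.sum_congr rfl fun i _ => by
          rw [hdψ2 x i, hgval i x hxK]
      rw [e1, e2, hφψ x]
      exact alg1 (fun i => fderiv ℝ ψ x (EuclideanSpace.single i 1)) (fun i => x i)
        (U ‖x‖) (U' ‖x‖) (ψ x) ‖x‖ (V ‖x‖) hrne (hsumx x)
    · obtain ⟨hf0, hp0, hq0⟩ := hzeroK x hxK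
      simp [hf0, hp0, hq0, hφnotK x hxK, hψnotK x hxK]
  have Hbe : ∀ x ∈ Ω, (∑ i, ψ x^2 * fderiv ℝ (g i) x (EuclideanSpace.single i 1))
      = I3 x := by
    intro x hx
    simp only [hI3def]
    by_cases hψx : ψ x = 0
    · have hφ0 : φ x = 0 := by rw [hφψ x, hψx]; ring
      simp [hψx, hφ0]
    · have hφx : x ∈ Function.support φ := by
        simp only [Function.mem_support]
        intro h0
        exact hψx (by rw [hψdef]; simp [h0])
      have hsuppopen : IsOpen (Function.support φ) := hφ1.continuous.isOpen_support
      have hr : 0 < ‖x‖ := norm_pos_iff.2 hx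
      have hrne : ‖x‖ ≠ 0 := hr.ne'
      have hKsup : Function.support φ ⊆ K := subset_tsupport φ
      have hmod : ∀ i : Fin N, fderiv ℝ (g i) x (EuclideanSpace.single i 1)
          = q ‖x‖ + x i * (q' ‖x‖ * (‖x‖⁻¹ * x i)) := by
        intro i
        have hev : (g i) =ᶠ[nhds x] fun y => q ‖y‖ * y i :=
          eventually_of_mem (hsuppopen.mem_nhds hφx) (fun y hy => hgval i y (hKsup hy))
        have hqn : HasFDerivAt (fun y : Euc N => q ‖y‖) (q' ‖x‖ • (‖x‖⁻¹ • innerSL ℝ x)) x :=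
          (hq _ (hmaps hx)).comp_hasFDerivAt x (hasFDerivAt_norm' hx)
        have hpi : HasFDerivAt (fun y : Euc N => y i) (EuclideanSpace.proj (𝕜 := ℝ) i) x :=
          (EuclideanSpace.proj (𝕜 := ℝ) i).hasFDerivAt
        have h : HasFDerivAt (fun y : Euc N => q ‖y‖ * y i) _ x := hqn.mul hpi
        rw [hev.fderiv_eq, h.fderiv]
        simp only [ContinuousLinearMap.add_apply, ContinuousLinearMap.smul_apply, smul_eq_mul,
          happly, PiLp.proj_apply, EuclideanSpace.single_apply, if_true]
        ring
      have hsum : ∑ i : Fin N, (q ‖x‖ + x i * (q' ‖x‖ * (‖x‖⁻¹ * x i)))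
          = (N : ℝ) * q ‖x‖ + q' ‖x‖ * ‖x‖ := by
        rw [Finset.sum_add_distrib]
        have h1 : ∑ _i : Fin N, q ‖x‖ = (N:ℝ) * q ‖x‖ := by
          rw [Finset.sum_const, Finset.card_univ, Fintype.card_fin, nsmul_eq_mul]
        have h2 : ∑ i, x i * (q' ‖x‖ * (‖x‖⁻¹ * x i)) = q' ‖x‖ * ‖x‖ := by
          have hterm : ∀ i : Fin N, x i * (q' ‖x‖ * (‖x‖⁻¹ * x i))
              = (q' ‖x‖ * ‖x‖⁻¹) * (x i)^2 := fun i => by ring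
          rw [Finset.sum_congr rfl (fun i _ => hterm i), ← Finset.mul_sum, hsumx x]
          field_simp
        rw [h1, h2]
      rw [Finset.sum_congr rfl (fun i _ => by rw [hmod i]), ← Finset.mul_sum, hsum, hφψ x]
      have hODEx := hODE ‖x‖ (hmaps hx)
      have hU''x : U'' ‖x‖ = V ‖x‖ * U ‖x‖ - (((N:ℝ)-1)/‖x‖) * U' ‖x‖ := by linarith
      simp only [hqdef, hq'def, hU''x]
      field_simp
      ring

  -- a.e. membership in Ω
  have haeΩ : ∀ᵐ x : Euc N, x ∈ Ω := by
    haveI : Nontrivial (Euc N) := by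
      refine ⟨EuclideanSpace.single ⟨0, by omega⟩ 1, 0, fun h => ?_⟩
      have := congrArg (fun v : Euc N => v ⟨0, by omega⟩) h
      simp [EuclideanSpace.single_apply] at this
    have hset : {x : Euc N | ¬ x ∈ Ω} = {0} := by ext x; simp [hΩdef]
    refine ae_iff.2 ?_
    rw [hset]
    exact measure_singleton 0
  -- continuity and integrability of pieces
  have hfψcont : Continuous fun x => fderiv ℝ ψ x := hψ.continuous_fderiv one_ne_zero
  have hsumcont : Continuous fun x : Euc N =>
      ∑ i, (fderiv ℝ ψ x (EuclideanSpace.single i 1))^2 := by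
    apply continuous_finset_sum
    intro i _
    exact (hfψcont.clm_apply continuous_const).pow 2
  have hfψ0 : ∀ x, x ∉ K → fderiv ℝ ψ x = 0 := fun x hx => (hzeroK x hx).2.1
  have hI1cont : Continuous I1 := by
    apply continuous_of_two_opens hΩo isOpen_ball hcov
    · exact ((huC.continuousOn.pow 2).mul hsumcont.continuousOn)
    · apply (continuousOn_const (c := (0:ℝ))).congr
      intro x hx
      rw [mem_ball, dist_zero_right] at hx
      have hz : fderiv ℝ ψ x = 0 := hfψ0 x (hballK x hx)
      simp [hI1def, hz]
  have hsuppI1 : Function.support I1 ⊆ K := by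
    intro x hx
    by_contra hc
    apply hx
    have hz : fderiv ℝ ψ x = 0 := hfψ0 x hc
    simp [hI1def, hz]
  have hI1cs : HasCompactSupport I1 :=
    IsCompact.of_isClosed_subset hKc (isClosed_tsupport I1) (closure_minimal hsuppI1 hKc.isClosed)
  have hI1int : Integrable I1 := hI1cont.integrable_of_hasCompactSupport hI1cs
  have hI3cont : Continuous I3 := by
    apply continuous_of_two_opens hΩo isOpen_ball hcov
    · apply ContinuousOn.add
      · exact ((hψ.continuous.continuousOn).pow 2).mul
          ((hU'c.continuousOn.comp continuous_norm.continuousOn hmaps).pow 2)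
      · exact (hV.comp continuous_norm.continuousOn hmaps).mul
          ((hφ1.continuous.continuousOn).pow 2)
    · apply (continuousOn_const (c := (0:ℝ))).congr
      intro x hx
      rw [mem_ball, dist_zero_right] at hx
      have hk := hballK x hx
      simp [hI3def, hψnotK x hk, hφnotK x hk]
  have hsuppI3 : Function.support I3 ⊆ K := by
    intro x hx
    by_contra hc
    apply hx
    simp [hI3def, hψnotK x hc, hφnotK x hc]
  have hI3cs : HasCompactSupport I3 :=
    IsCompact.of_isClosed_subset hKc (isClosed_tsupport I3) (closure_minimal hsuppI3 hKc.isClosed)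
  have hI3int : Integrable I3 := hI3cont.integrable_of_hasCompactSupport hI3cs
  have hψ2C : ContDiff ℝ 1 (fun y => ψ y^2) := hψ.pow 2
  have hψ2cs : HasCompactSupport (fun y => ψ y^2) := by
    apply IsCompact.of_isClosed_subset hKc (isClosed_tsupport _)
    apply closure_minimal _ hKc.isClosed
    intro x hx
    by_contra hc
    apply hx
    simp [hψnotK x hc]
  have hI2cont : ∀ i : Fin N, Continuous fun x =>
      fderiv ℝ (fun y => ψ y^2) x (EuclideanSpace.single i 1) * g i x := fun i =>
    ((hψ2C.continuous_fderiv one_ne_zero).clm_apply continuous_const).mul (hgC i).continuous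
  have hfψ20 : ∀ x, x ∉ K → fderiv ℝ (fun y => ψ y^2) x = 0 := fun x hx => (hzeroK x hx).2.2
  have hI2int : ∀ i : Fin N, Integrable (fun x =>
      fderiv ℝ (fun y => ψ y^2) x (EuclideanSpace.single i 1) * g i x) := by
    intro i
    apply (hI2cont i).integrable_of_hasCompactSupport
    apply IsCompact.of_isClosed_subset hKc (isClosed_tsupport _)
    apply closure_minimal _ hKc.isClosed
    intro x hx
    by_contra hc
    apply hx
    simp [hfψ20 x hc]
  have hI4int : ∀ i : Fin N, Integrable (fun x =>
      ψ x^2 * fderiv ℝ (g i) x (EuclideanSpace.single i 1)) := by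
    intro i
    apply Continuous.integrable_of_hasCompactSupport
    · exact (hψ.continuous.pow 2).mul
        (((hgC i).continuous_fderiv one_ne_zero).clm_apply continuous_const)
    · apply IsCompact.of_isClosed_subset hKc (isClosed_tsupport _)
      apply closure_minimal _ hKc.isClosed
      intro x hx
      by_contra hc
      apply hx
      simp [hψnotK x hc]
  have hIBP : ∀ i : Fin N, ∫ x, fderiv ℝ (fun y => ψ y^2) x (EuclideanSpace.single i 1) * g i x
      = - ∫ x, ψ x^2 * fderiv ℝ (g i) x (EuclideanSpace.single i 1) := by
    intro i
    have h := ibp_aux (fun y => ψ y^2) (g i) (EuclideanSpace.single i 1) hψ2C (hgC i) hψ2cs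
    linarith [h]
  have hsumI4 : ∑ i, ∫ x, ψ x^2 * fderiv ℝ (g i) x (EuclideanSpace.single i 1)
      = ∫ x, I3 x := by
    rw [← integral_finset_sum _ (fun i _ => hI4int i)]
    apply integral_congr_ae
    filter_upwards [haeΩ] with x hx
    exact Hbe x hx
  have hint2 : Integrable (fun x =>
      ∑ i, fderiv ℝ (fun y => ψ y^2) x (EuclideanSpace.single i 1) * g i x) :=
    integrable_finset_sum _ (fun i _ => hI2int i)
  have key : ∫ x, ((∑ i, (fderiv ℝ φ x (EuclideanSpace.single i 1))^2) + V ‖x‖ * φ x^2)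
      = ∫ x, I1 x := by
    have h1 : ∫ x, ((∑ i, (fderiv ℝ φ x (EuclideanSpace.single i 1))^2) + V ‖x‖ * φ x^2)
        = ∫ x, (I1 x + ((∑ i, fderiv ℝ (fun y => ψ y^2) x (EuclideanSpace.single i 1) * g i x)
          + I3 x)) := by
      apply integral_congr_ae
      filter_upwards [haeΩ] with x hx
      rw [Hae x hx]
      ring
    have e4 : ∫ x, (I1 x + ((∑ i, fderiv ℝ (fun y => ψ y^2) x (EuclideanSpace.single i 1) * g i x)
          + I3 x))
        = (∫ x, I1 x) + ∫ x, ((∑ i, fderiv ℝ (fun y => ψ y^2) x (EuclideanSpace.single i 1) * g i x)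
          + I3 x) := integral_add hI1int (hint2.add hI3int)
    have e3 : ∫ x, ((∑ i, fderiv ℝ (fun y => ψ y^2) x (EuclideanSpace.single i 1) * g i x) + I3 x)
        = (∫ x, ∑ i, fderiv ℝ (fun y => ψ y^2) x (EuclideanSpace.single i 1) * g i x)
          + ∫ x, I3 x := integral_add hint2 hI3int
    have e5 : (∫ x, ∑ i, fderiv ℝ (fun y => ψ y^2) x (EuclideanSpace.single i 1) * g i x)
        = ∑ i, ∫ x, fderiv ℝ (fun y => ψ y^2) x (EuclideanSpace.single i 1) * g i x :=
      integral_finset_sum _ (fun i _ => hI2int i)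
    have e6 : (∑ i, ∫ x, fderiv ℝ (fun y => ψ y^2) x (EuclideanSpace.single i 1) * g i x)
        = ∑ i, -(∫ x, ψ x^2 * fderiv ℝ (g i) x (EuclideanSpace.single i 1)) :=
      Finset.sum_congr rfl (fun i _ => hIBP i)
    have e7 : (∑ i : Fin N, -(∫ x, ψ x^2 * fderiv ℝ (g i) x (EuclideanSpace.single i 1)))
        = -(∑ i : Fin N, ∫ x, ψ x^2 * fderiv ℝ (g i) x (EuclideanSpace.single i 1)) := by
      rw [← Finset.sum_neg_distrib]
    rw [h1, e4, e3, e5, e6, e7, hsumI4]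
    ring
  constructor
  · have hL : (fun x : Euc N => ‖gradient ψ x‖^2 * U ‖x‖^2) = I1 := by
      funext x
      rw [norm_gradient_sq']
      simp only [hI1def]
      ring
    have hR : (fun x : Euc N => ‖gradient φ x‖^2 + V ‖x‖ * φ x^2)
        = fun x => (∑ i, (fderiv ℝ φ x (EuclideanSpace.single i 1))^2) + V ‖x‖ * φ x^2 := by
      funext x
      rw [norm_gradient_sq']
    rw [hL, hR]
    exact key.symm
  · have hR : (fun x : Euc N => ‖gradient φ x‖^2 + V ‖x‖ * φ x^2)
        = fun x => (∑ i, (fderiv ℝ φ x (EuclideanSpace.single i 1))^2) + V ‖x‖ * φ x^2 := by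
      funext x
      rw [norm_gradient_sq']
    rw [hR, key]
    apply integral_nonneg
    intro x
    simp only [hI1def]
    positivity
end
end

section
/- Let N ≥ 2 be an integer, let V : (0,∞) → ℝ be continuous, and let U ∈ C²((0,∞)) be a positive solution of equation (O) such that for every r > 0 the integrals defining F[U](r) := U(r)·∫₀^r s^{1−N}U(s)^{−2}(∫₀^s τ^{N−1}U(τ)² dτ) ds converge. Let T ≥ 0, γ₁, γ₂ ∈ ℝ and c > 1 be such that ζ(t) := t^{γ₁}(log(c+t))^{γ₂} is monotone decreasing on (T,∞), and let κ > 0 satisfy −sζ'(s) ≤ κζ(s) for all s ∈ (T,∞). Define w(x,t) := ζ(t)·[U(|x|) − κ t^{−1} F[U](|x|)] for x ∈ ℝ^N∖{0} and t ∈ (T,∞). Then F[U] satisfies (F[U])''(r) + ((N−1)/r)(F[U])'(r) − V(r)F[U](r) = U(r) on (0,∞), and w satisfies ∂_t w ≥ Δw − V(|x|)w on (ℝ^N∖{0}) × (T,∞). -/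
open MeasureTheory Metric Filter Set Asymptotics

noncomputable section

theorem hasFDerivAt_norm'_s19 {F : Type*} [NormedAddCommGroup F] [InnerProductSpace ℝ F]
    (y : F) (hy : y ≠ 0) :
    HasFDerivAt (fun z : F => ‖z‖) (‖y‖⁻¹ • innerSL ℝ y) y := by
  have h1 : HasFDerivAt (fun z : F => ‖z‖ ^ 2) (2 • (innerSL ℝ y)) y :=
    (hasStrictFDerivAt_norm_sq y).hasFDerivAt
  have h2 : HasDerivAt Real.sqrt (1 / (2 * Real.sqrt (‖y‖ ^ 2))) (‖y‖ ^ 2) :=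
    Real.hasDerivAt_sqrt (pow_ne_zero 2 (norm_ne_zero_iff.2 hy))
  have h3 := h2.comp_hasFDerivAt y h1
  have h4 : (fun z : F => Real.sqrt (‖z‖ ^ 2)) = fun z : F => ‖z‖ := by
    funext z; rw [Real.sqrt_sq (norm_nonneg z)]
  rw [Function.comp_def, h4] at h3
  refine h3.congr_fderiv ?_
  rw [Real.sqrt_sq (norm_nonneg y)]
  ext v
  simp only [ContinuousLinearMap.smul_apply, ContinuousLinearMap.add_apply, two_smul]
  have : ‖y‖ ≠ 0 := norm_ne_zero_iff.2 hy
  field_simp; ring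

theorem lap_radial {N : ℕ} (G G' G'' : ℝ → ℝ)
    (hG : ∀ r ∈ Ioi (0:ℝ), HasDerivAt G (G' r) r)
    (hG' : ∀ r ∈ Ioi (0:ℝ), HasDerivAt G' (G'' r) r)
    (x : Euc N) (hx : x ≠ 0) :
    lap N (fun z => G ‖z‖) x = G'' ‖x‖ + (((N:ℝ) - 1) / ‖x‖) * G' ‖x‖ := by
  set r := ‖x‖ with hrdef
  have hr : 0 < r := norm_pos_iff.2 hx
  have factA : ∀ y : Euc N, y ≠ 0 →
      HasFDerivAt (fun z : Euc N => G ‖z‖) (G' ‖y‖ • (‖y‖⁻¹ • innerSL ℝ y)) y := by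
    intro y hy
    exact (hG ‖y‖ (norm_pos_iff.2 hy)).comp_hasFDerivAt y (hasFDerivAt_norm'_s19 y hy)
  have key : ∀ i : Fin N,
      fderiv ℝ (fun y => fderiv ℝ (fun z : Euc N => G ‖z‖) y (EuclideanSpace.single i 1)) x
          (EuclideanSpace.single i 1)
        = G'' r * (x i * x i) / r ^ 2 + G' r * (r⁻¹ - (x i * x i) / r ^ 3) := by
    intro i
    set e := EuclideanSpace.single i (1:ℝ) with he
    have hinner : ∀ y : Euc N, (innerSL ℝ y) e = y i := by
      intro y
      simp [he, EuclideanSpace.inner_single_right]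
    have hev : (fun y => fderiv ℝ (fun z : Euc N => G ‖z‖) y e)
        =ᶠ[nhds x] (fun y => G' ‖y‖ * (‖y‖⁻¹ * y i)) := by
      filter_upwards [IsOpen.mem_nhds isOpen_compl_singleton hx] with y hy
      have := (factA y hy).fderiv
      rw [this]
      simp only [ContinuousLinearMap.smul_apply, smul_eq_mul, hinner y, mul_assoc]
    rw [hev.fderiv_eq]
    have hA : HasFDerivAt (fun y : Euc N => G' ‖y‖) (G'' r • (r⁻¹ • innerSL ℝ x)) x :=
      (hG' r hr).comp_hasFDerivAt x (hasFDerivAt_norm'_s19 x hx)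
    have hB : HasFDerivAt (fun y : Euc N => ‖y‖⁻¹) ((-(r^2)⁻¹) • (r⁻¹ • innerSL ℝ x)) x := by
      have h := (hasDerivAt_inv hr.ne').comp_hasFDerivAt x (hasFDerivAt_norm'_s19 x hx)
      exact h
    have hC : HasFDerivAt (fun y : Euc N => y i) (EuclideanSpace.proj (𝕜 := ℝ) i) x :=
      (EuclideanSpace.proj (𝕜 := ℝ) i).hasFDerivAt
    have hφ := hA.mul (hB.mul hC)
    rw [show (fun y : Euc N => G' ‖y‖ * (‖y‖⁻¹ * y i)) = (fun y => G' ‖y‖) * ((fun y => ‖y‖⁻¹) * fun y => y i) from rfl, hφ.fderiv]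
    have hproj : (EuclideanSpace.proj (𝕜 := ℝ) i) e = 1 := by
      simp [he, EuclideanSpace.single_apply]
    simp only [ContinuousLinearMap.add_apply, ContinuousLinearMap.smul_apply,
      ContinuousLinearMap.coe_smul', Pi.smul_apply, Pi.mul_apply, hinner x, hproj, smul_eq_mul]
    field_simp
    ring
  have hsum : ∑ i : Fin N, x i * x i = r ^ 2 := by
    have h1 : (inner ℝ x x : ℝ) = ∑ i, x i * x i := by
      rw [PiLp.inner_apply]; rfl
    rw [← h1, real_inner_self_eq_norm_sq]
  have expand : ∀ i : Fin N, G'' r * (x i * x i) / r ^ 2 + G' r * (r⁻¹ - x i * x i / r ^ 3)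
      = (G'' r / r ^ 2 - G' r / r ^ 3) * (x i * x i) + G' r / r := by
    intro i; field_simp; ring
  unfold lap
  simp only [key, expand]
  rw [Finset.sum_add_distrib, ← Finset.mul_sum, hsum, Finset.sum_const, Finset.card_univ,
    Fintype.card_fin, nsmul_eq_mul]
  field_simp
  ring

theorem FUaux (N : ℕ) (V U : ℝ → ℝ)
    (hU : IsSolO N V U) (hUpos : ∀ r ∈ Ioi (0 : ℝ), 0 < U r)
    (hint1 : ∀ s ∈ Ioi (0 : ℝ),
      IntervalIntegrable (fun τ : ℝ => τ ^ ((N : ℝ) - 1) * U τ ^ 2) volume 0 s)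
    (hint2 : ∀ r ∈ Ioi (0 : ℝ),
      IntervalIntegrable (fun s : ℝ => s ^ ((1 : ℝ) - N) / U s ^ 2 *
        ∫ τ in (0:ℝ)..s, τ ^ ((N : ℝ) - 1) * U τ ^ 2) volume 0 r) :
    ∃ F1 : ℝ → ℝ,
      (∀ r ∈ Ioi (0:ℝ), HasDerivAt (FU N U) (F1 r) r) ∧
      (∀ r ∈ Ioi (0:ℝ),
        HasDerivAt F1 (V r * FU N U r + U r - (((N:ℝ)-1)/r) * F1 r) r) ∧
      (∀ r ∈ Ioi (0:ℝ), 0 ≤ FU N U r) := by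
  set II : ℝ → ℝ := fun s => ∫ τ in (0:ℝ)..s, τ ^ ((N:ℝ) - 1) * U τ ^ 2 with hIIdef
  set h : ℝ → ℝ := fun s => s ^ ((1:ℝ) - N) / U s ^ 2 * II s with hhdef
  set g : ℝ → ℝ := fun r => ∫ s in (0:ℝ)..r, h s with hgdef
  have hUcont : ContinuousOn U (Ioi 0) := hU.1.continuousOn
  have hUd : ∀ r ∈ Ioi (0:ℝ), HasDerivAt U (deriv U r) r := by
    intro r hr
    exact ((hU.1.differentiableOn (by norm_num)).differentiableAt
      (isOpen_Ioi.mem_nhds hr)).hasDerivAt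
  have hU'c : ContDiffOn ℝ 1 (deriv U) (Ioi 0) := by
    exact hU.1.deriv_of_isOpen isOpen_Ioi (m := 1) (by norm_num)
  have hU'd : ∀ r ∈ Ioi (0:ℝ), HasDerivAt (deriv U) (deriv (deriv U) r) r := by
    intro r hr
    exact ((hU'c.differentiableOn (by norm_num)).differentiableAt
      (isOpen_Ioi.mem_nhds hr)).hasDerivAt
  have hIcont : ContinuousOn (fun τ : ℝ => τ ^ ((N:ℝ)-1) * U τ ^ 2) (Ioi 0) := by
    intro τ hτ
    exact ((Real.continuousAt_rpow_const τ _ (Or.inl (ne_of_gt hτ))).continuousWithinAt).mul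
      ((hUcont τ hτ).pow 2)
  have hII : ∀ s ∈ Ioi (0:ℝ), HasDerivAt II (s ^ ((N:ℝ)-1) * U s ^ 2) s := by
    intro s hs
    exact intervalIntegral.integral_hasDerivAt_right (hint1 s hs)
      (hIcont.stronglyMeasurableAtFilter isOpen_Ioi s hs)
      (hIcont.continuousAt (isOpen_Ioi.mem_nhds hs))
  have hhcont : ContinuousOn h (Ioi 0) := by
    intro s hs
    have h1 : ContinuousWithinAt (fun s : ℝ => s ^ ((1:ℝ) - N)) (Ioi 0) s :=
      (Real.continuousAt_rpow_const s _ (Or.inl (ne_of_gt hs))).continuousWithinAt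
    have h2 : ContinuousWithinAt II (Ioi 0) s := (hII s hs).continuousAt.continuousWithinAt
    exact (h1.div ((hUcont s hs).pow 2) (pow_ne_zero 2 (hUpos s hs).ne')).mul h2
  have hg : ∀ r ∈ Ioi (0:ℝ), HasDerivAt g (h r) r := by
    intro r hr
    exact intervalIntegral.integral_hasDerivAt_right (hint2 r hr)
      (hhcont.stronglyMeasurableAtFilter isOpen_Ioi r hr)
      (hhcont.continuousAt (isOpen_Ioi.mem_nhds hr))
  have hFUeq : FU N U = fun r => U r * g r := rfl
  refine ⟨fun r => deriv U r * g r + U r * h r, ?_, ?_, ?_⟩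
  · intro r hr
    rw [hFUeq]
    exact (hUd r hr).mul (hg r hr)
  · intro r hr
    have hr0 : (0:ℝ) < r := hr
    have hUr : U r ≠ 0 := (hUpos r hr).ne'
    have hp : HasDerivAt (fun s : ℝ => s ^ ((1:ℝ) - N)) (((1:ℝ) - N) * r ^ ((1:ℝ) - N - 1)) r :=
      Real.hasDerivAt_rpow_const (Or.inl hr0.ne')
    have hq : HasDerivAt (fun s : ℝ => U s ^ 2) (2 * U r ^ 1 * deriv U r) r := (hUd r hr).pow 2
    have hdiv := hp.div hq (pow_ne_zero 2 hUr)
    have hhd : HasDerivAt h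
        ((((1:ℝ) - N) * r ^ ((1:ℝ) - N - 1) * U r ^ 2 -
            r ^ ((1:ℝ) - N) * (2 * U r ^ 1 * deriv U r)) / (U r ^ 2) ^ 2 * II r
          + r ^ ((1:ℝ) - N) / U r ^ 2 * (r ^ ((N:ℝ)-1) * U r ^ 2)) r :=
      hdiv.mul (hII r hr)
    have hF1 := ((hU'd r hr).mul (hg r hr)).add ((hUd r hr).mul hhd)
    refine HasDerivAt.congr_deriv (f := fun r => deriv U r * g r + U r * h r) hF1 ?_
    have hODE := hU.2 r hr
    have hab : r ^ ((1:ℝ) - N) * r ^ ((N:ℝ) - 1) = 1 := by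
      rw [← Real.rpow_add hr0]; norm_num
    have hsub : r ^ ((1:ℝ) - N - 1) = r ^ ((1:ℝ) - N) / r := by
      rw [Real.rpow_sub hr0, Real.rpow_one]
    have hU'' : deriv (deriv U) r = V r * U r - (((N:ℝ)-1)/r) * deriv U r := by linarith
    have ha0 : r ^ ((1:ℝ) - N) ≠ 0 := left_ne_zero_of_mul_eq_one hab
    have hb : r ^ ((N:ℝ) - 1) = (r ^ ((1:ℝ) - N))⁻¹ :=
      eq_inv_of_mul_eq_one_left (by rw [mul_comm]; exact hab)
    simp only [hFUeq, hhdef, hsub, hU'', hb]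
    field_simp
    ring
  · intro r hr
    have hg0 : 0 ≤ g r := by
      apply intervalIntegral.integral_nonneg (le_of_lt hr)
      intro s hs
      have hs0 : 0 ≤ s := hs.1
      have hI0 : 0 ≤ II s := by
        apply intervalIntegral.integral_nonneg hs0
        intro τ hτ
        exact mul_nonneg (Real.rpow_nonneg hτ.1 _) (sq_nonneg _)
      exact mul_nonneg (div_nonneg (Real.rpow_nonneg hs0 _) (sq_nonneg _)) hI0
    rw [hFUeq]
    exact mul_nonneg (hUpos r hr).le hg0

theorem ineq2 (z z' A B κ t : ℝ) (ht : 0 < t) (hz : 0 ≤ z) (hz' : z' ≤ 0)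
    (hA : 0 ≤ A) (hB : 0 ≤ B) (hκ : 0 ≤ κ) (hκi : -(t * z') ≤ κ * z) :
    -(z * κ * t⁻¹ * A) ≤ z' * (A - κ * t⁻¹ * B) + z * (0 - κ * (-(t^2)⁻¹) * B) := by
  have h1 : -(κ * z) / t ≤ z' := by rw [div_le_iff₀ ht]; linarith
  have h2 : 0 ≤ A * (z' + κ * z * t⁻¹) := by
    apply mul_nonneg hA
    have he : κ * z * t⁻¹ = -(-(κ * z) / t) := by field_simp
    rw [he]; linarith
  have h3 : 0 ≤ (κ * t⁻¹ * B) * (z * t⁻¹ - z') := by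
    apply mul_nonneg
    · positivity
    · have : 0 ≤ z * t⁻¹ := mul_nonneg hz (inv_nonneg.2 ht.le)
      linarith
  have e : z' * (A - κ * t⁻¹ * B) + z * (0 - κ * (-(t^2)⁻¹) * B) + (z * κ * t⁻¹ * A)
      = A * (z' + κ * z * t⁻¹) + (κ * t⁻¹ * B) * (z * t⁻¹ - z') := by
    field_simp
    ring
  linarith

/-- Lemma 5.4: `F[U]` satisfies `F[U]'' + ((N-1)/r)F[U]' - V F[U] = U`, and the
function `w(x,t) = ζ(t)[U(|x|) - κ t⁻¹ F[U](|x|)]` is a supersolution of the heat equation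
`∂ₜ w ≥ Δw - V(|x|)w` on `(ℝ^N \ {0}) × (T,∞)`. -/
theorem stmt19 (N : ℕ) (hN : 2 ≤ N) (V U : ℝ → ℝ) (hV : ContinuousOn V (Ioi 0))
    (hU : IsSolO N V U) (hUpos : ∀ r ∈ Ioi (0 : ℝ), 0 < U r)
    (hint1 : ∀ s ∈ Ioi (0 : ℝ),
      IntervalIntegrable (fun τ : ℝ => τ ^ ((N : ℝ) - 1) * U τ ^ 2) volume 0 s)
    (hint2 : ∀ r ∈ Ioi (0 : ℝ),
      IntervalIntegrable (fun s : ℝ => s ^ ((1 : ℝ) - N) / U s ^ 2 *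
        ∫ τ in (0:ℝ)..s, τ ^ ((N : ℝ) - 1) * U τ ^ 2) volume 0 r)
    (T γ1 γ2 c κ : ℝ) (hT : 0 ≤ T) (hc : 1 < c)
    (hζmono : AntitoneOn (zeta γ1 γ2 c) (Ioi T))
    (hκ : 0 < κ)
    (hκineq : ∀ s ∈ Ioi T, -(s * deriv (zeta γ1 γ2 c) s) ≤ κ * zeta γ1 γ2 c s) :
    (∀ r ∈ Ioi (0 : ℝ),
      deriv (deriv (FU N U)) r + (((N : ℝ) - 1) / r) * deriv (FU N U) r
        - V r * FU N U r = U r) ∧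
    (∀ x : Euc N, x ≠ 0 → ∀ t ∈ Ioi T,
      lap N (fun z : Euc N => zeta γ1 γ2 c t * (U ‖z‖ - κ * t⁻¹ * FU N U ‖z‖)) x
          - V ‖x‖ * (zeta γ1 γ2 c t * (U ‖x‖ - κ * t⁻¹ * FU N U ‖x‖))
        ≤ deriv (fun s : ℝ => zeta γ1 γ2 c s * (U ‖x‖ - κ * s⁻¹ * FU N U ‖x‖)) t) := by
  obtain ⟨F1, hF1, hF2, hFnn⟩ := FUaux N V U hU hUpos hint1 hint2
  have hUd : ∀ r ∈ Ioi (0:ℝ), HasDerivAt U (deriv U r) r := by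
    intro r hr
    exact ((hU.1.differentiableOn (by norm_num)).differentiableAt
      (isOpen_Ioi.mem_nhds hr)).hasDerivAt
  have hU'c : ContDiffOn ℝ 1 (deriv U) (Ioi 0) :=
    hU.1.deriv_of_isOpen isOpen_Ioi (m := 1) (by norm_num)
  have hU'd : ∀ r ∈ Ioi (0:ℝ), HasDerivAt (deriv U) (deriv (deriv U) r) r := by
    intro r hr
    exact ((hU'c.differentiableOn (by norm_num)).differentiableAt
      (isOpen_Ioi.mem_nhds hr)).hasDerivAt
  constructor
  · intro r hr
    have hev : deriv (FU N U) =ᶠ[nhds r] F1 := by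
      filter_upwards [isOpen_Ioi.mem_nhds hr] with y hy
      exact (hF1 y hy).deriv
    have h2 : deriv (deriv (FU N U)) r = V r * FU N U r + U r - (((N:ℝ)-1)/r) * F1 r := by
      rw [hev.deriv_eq]; exact (hF2 r hr).deriv
    have h1 : deriv (FU N U) r = F1 r := (hF1 r hr).deriv
    rw [h1, h2]; ring
  · intro x hx t ht
    set r := ‖x‖ with hrdef
    have hr : r ∈ Ioi (0:ℝ) := norm_pos_iff.2 hx
    have hr0 : (0:ℝ) < r := hr
    have ht' : T < t := ht
    have ht0 : 0 < t := lt_of_le_of_lt hT ht'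
    have hct : (0:ℝ) < c + t := by linarith
    have hlogpos : 0 < Real.log (c + t) := Real.log_pos (by linarith)
    have hζpos : 0 < zeta γ1 γ2 c t :=
      mul_pos (Real.rpow_pos_of_pos ht0 _) (Real.rpow_pos_of_pos hlogpos _)
    have hζdiff : DifferentiableAt ℝ (zeta γ1 γ2 c) t := by
      have hz1 : HasDerivAt (fun s : ℝ => s ^ γ1) (γ1 * t ^ (γ1 - 1)) t :=
        Real.hasDerivAt_rpow_const (Or.inl ht0.ne')
      have hlog : HasDerivAt (fun s : ℝ => Real.log (c + s)) ((c + t)⁻¹ * 1) t :=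
        (Real.hasDerivAt_log hct.ne').comp t ((hasDerivAt_id t).const_add c)
      have hz2 := (Real.hasDerivAt_rpow_const
        (x := Real.log (c + t)) (p := γ2) (Or.inl hlogpos.ne')).comp t hlog
      exact (hz1.mul hz2).differentiableAt
    have hζ : HasDerivAt (zeta γ1 γ2 c) (deriv (zeta γ1 γ2 c) t) t := hζdiff.hasDerivAt
    have hζ'le : deriv (zeta γ1 γ2 c) t ≤ 0 := by
      have h2 := (hζ.hasDerivWithinAt (s := Ioi t))
      rw [hasDerivWithinAt_iff_tendsto_slope] at h2
      rw [Set.diff_singleton_eq_self (by simp)] at h2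
      refine le_of_tendsto h2 ?_
      filter_upwards [self_mem_nhdsWithin] with s hs
      have hst : t < s := hs
      have hmono : zeta γ1 γ2 c s ≤ zeta γ1 γ2 c t :=
        hζmono ht (show s ∈ Ioi T from lt_trans ht' hst) hst.le
      rw [slope_def_field]
      apply div_nonpos_of_nonpos_of_nonneg <;> linarith
    -- Laplacian of the radial function
    have hlap := lap_radial
      (G := fun ρ => zeta γ1 γ2 c t * (U ρ - κ * t⁻¹ * FU N U ρ))
      (G' := fun ρ => zeta γ1 γ2 c t * (deriv U ρ - κ * t⁻¹ * F1 ρ))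
      (G'' := fun ρ => zeta γ1 γ2 c t * (deriv (deriv U) ρ - κ * t⁻¹ *
          (V ρ * FU N U ρ + U ρ - (((N:ℝ)-1)/ρ) * F1 ρ)))
      (fun ρ hρ => (((hUd ρ hρ).sub ((hF1 ρ hρ).const_mul (κ * t⁻¹))).const_mul
        (zeta γ1 γ2 c t)))
      (fun ρ hρ => (((hU'd ρ hρ).sub ((hF2 ρ hρ).const_mul (κ * t⁻¹))).const_mul
        (zeta γ1 γ2 c t)))
      x hx
    have hlap' : lap N (fun z : Euc N => zeta γ1 γ2 c t * (U ‖z‖ - κ * t⁻¹ * FU N U ‖z‖)) x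
        = zeta γ1 γ2 c t * (deriv (deriv U) r - κ * t⁻¹ *
            (V r * FU N U r + U r - (((N:ℝ)-1)/r) * F1 r))
          + (((N:ℝ) - 1) / r) * (zeta γ1 γ2 c t * (deriv U r - κ * t⁻¹ * F1 r)) := hlap
    have hODE := hU.2 r hr
    have hU'' : deriv (deriv U) r = V r * U r - (((N:ℝ)-1)/r) * deriv U r := by linarith
    have hμ : lap N (fun z : Euc N => zeta γ1 γ2 c t * (U ‖z‖ - κ * t⁻¹ * FU N U ‖z‖)) x
        - V ‖x‖ * (zeta γ1 γ2 c t * (U ‖x‖ - κ * t⁻¹ * FU N U ‖x‖))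
        = -(zeta γ1 γ2 c t * κ * t⁻¹ * U r) := by
      rw [hlap', hU'']
      field_simp
      ring
    rw [hμ]
    have hinv : HasDerivAt (fun s : ℝ => κ * s⁻¹ * FU N U r) (κ * (-(t^2)⁻¹) * FU N U r) t :=
      ((hasDerivAt_inv ht0.ne').const_mul κ).mul_const (FU N U r)
    have hrhs : HasDerivAt (fun s : ℝ => zeta γ1 γ2 c s * (U r - κ * s⁻¹ * FU N U r))
        (deriv (zeta γ1 γ2 c) t * (U r - κ * t⁻¹ * FU N U r)
          + zeta γ1 γ2 c t * (0 - κ * (-(t^2)⁻¹) * FU N U r)) t :=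
      hζ.mul ((hasDerivAt_const t (U r)).sub hinv)
    rw [hrhs.deriv]
    exact ineq2 (zeta γ1 γ2 c t) (deriv (zeta γ1 γ2 c) t) (U r) (FU N U r) κ t
      ht0 hζpos.le hζ'le (hUpos r hr).le (hFnn r hr) hκ.le (hκineq t ht)
end
end
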